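/- arXiv:1111.1395 — 7 statements merged into one kernel-verified Lean document; each statement's English description precedes it below -/
import Mathlib

section
/- Let U be a finite-dimensional complex vector space with symplectic form σ, λ: ℂ× → Sp(U,σ) a homomorphism with weight decomposition U = U_{e_0} ⊕ ... ⊕ U_{e_s}, e_0 > ... > e_s, and L_i := U_{e_0} ⊕ ... ⊕ U_{e_i}. If A ⊂ U is a Lagrangian subspace and d_i(A) := dim(A∩L_i / A∩L_{i-1}), then d_i(A) + d_{s-i}(A) = dim U_{e_i} for all 0 ≤ i ≤ s. -/
/-!
Since `λ(2)` preserves `σ` and acts on `U_{eᵢ}` by `2 ^ eᵢ`, the weight spaces `U_{eᵢ}` and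
`U_{eⱼ}` are `σ`-orthogonal unless `eᵢ + eⱼ = 0`. Nondegeneracy then forces every weight to have
an opposite, so the strictly decreasing weights are symmetric, `e_{s-i} = -eᵢ`, and consequently
`Lᵢ^⊥ = L_{s-i-1}`. For a Lagrangian `A` and any subspace `X` one has
`dim (A ∩ X^⊥) = dim A - dim X + dim (A ∩ X)`, because `(A ∩ X)^⊥ = A + X^⊥`. Applied to
`X = Lᵢ` and `X = L_{i-1}`, this expresses `d_{s-i}(A)` as `dim Lᵢ - dim L_{i-1} - dᵢ(A)`.
-/

open Module Submodule
open LinearMap (BilinForm)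

theorem Complex.two_zpow_eq_one_iff {m : ℤ} : (2 : ℂ) ^ m = 1 ↔ m = 0 := by
  simpa using Complex.ofReal_inj.trans <| zpow_eq_one_iff_right₀ zero_le_two (by norm_num1)

theorem Fin.apply_rev_eq_neg_of_strictAnti {n : ℕ} {α : Type*} [AddCommGroup α] [LinearOrder α]
    [IsOrderedAddMonoid α] {e : Fin n → α} (he : StrictAnti e) (hneg : ∀ i, ∃ j, e j = -e i)
    (i : Fin n) : e i.rev = -e i := by
  have hrange : Set.range (fun i : Fin n => e i.rev) = Set.range (fun i => -e i) := by
    rw [show (fun i => e i.rev) = e ∘ Fin.rev from rfl, Fin.rev_surjective.range_comp]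
    ext x
    constructor
    · rintro ⟨i, rfl⟩
      obtain ⟨j, hj⟩ := hneg i
      exact ⟨j, by simp only [hj, neg_neg]⟩
    · rintro ⟨i, rfl⟩
      exact hneg i
  have hmono : StrictMono fun i : Fin n => e i.rev := fun a b hab => he (Fin.rev_lt_rev.2 hab)
  have hmono_neg : StrictMono fun i => -e i := fun a b hab => neg_lt_neg (he hab)
  exact congrFun ((hmono.range_inj hmono_neg).1 hrange) i

theorem iSupIndep.finrank_iSup_le_eq_add {K V ι : Type*} [DivisionRing K] [AddCommGroup V]
    [Module K V] [FiniteDimensional K V] [PartialOrder ι] {W : ι → Submodule K V}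
    (hW : iSupIndep W) (i : ι) :
    finrank K ↥(⨆ j ≤ i, W j) = finrank K ↥(⨆ j < i, W j) + finrank K (W i) := by
  have hsplit : (⨆ j ≤ i, W j) = (⨆ j < i, W j) ⊔ W i := by
    refine le_antisymm (iSup₂_le fun j hj => ?_)
      (sup_le (biSup_mono fun j => le_of_lt) (le_biSup W le_rfl))
    rcases hj.lt_or_eq with hj | rfl
    · exact le_sup_of_le_left (le_iSup₂_of_le j hj le_rfl)
    · exact le_sup_right
  have hdisj : Disjoint (⨆ j < i, W j) (W i) :=
    ((hW i).mono_right (biSup_mono fun j => ne_of_lt)).symm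
  have := Submodule.finrank_sup_add_finrank_inf_eq (⨆ j < i, W j) (W i)
  rw [hdisj.eq_bot, finrank_bot, add_zero, ← hsplit] at this
  exact this

namespace LinearMap

theorem apply_eq_zero_of_isometry_of_mul_ne_one {K V : Type*} [Field K] [AddCommGroup V]
    [Module K V] (σ : V →ₗ[K] V →ₗ[K] K) (g : V →ₗ[K] V) (hg : ∀ x y, σ (g x) (g y) = σ x y)
    {a b : K} (hab : a * b ≠ 1) {x y : V} (hx : g x = a • x) (hy : g y = b • y) : σ x y = 0 := by
  have h := hg x y
  simp only [hx, hy, map_smul, LinearMap.smul_apply, smul_eq_mul, mul_left_comm b a,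
    ← mul_assoc] at h
  by_contra hxy
  exact hab ((mul_eq_right₀ hxy).1 h)

namespace BilinForm

section CommRing

variable {R M : Type*} {ι : Sort*} [CommRing R] [AddCommGroup M] [Module R M] {B : BilinForm R M}
  {W : ι → Submodule R M}

theorem orthogonal_iSup (B : BilinForm R M) (W : ι → Submodule R M) :
    B.orthogonal (⨆ k, W k) = ⨅ k, B.orthogonal (W k) := by
  refine le_antisymm (le_iInf fun k => B.orthogonal_le (le_iSup W k)) fun x hx n hn => ?_
  refine Submodule.iSup_induction W (motive := fun n => B n x = 0) hn
    (fun k y hy => (mem_iInf _).1 hx k y hy) (by simp) fun a b ha hb => ?_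
  rw [map_add, LinearMap.add_apply, ha, hb, add_zero]

theorem orthogonal_biSup (B : BilinForm R M) (W : ι → Submodule R M) (p : ι → Prop) :
    B.orthogonal (⨆ k, ⨆ _ : p k, W k) = ⨅ k, ⨅ _ : p k, B.orthogonal (W k) := by
  simp only [orthogonal_iSup]

theorem exists_eq_neg_of_orthogonal_of_ne_bot {G : Type*} [AddGroup G] (hB : B.Nondegenerate)
    (hW : ⨆ k, W k = ⊤) {e : ι → G}
    (horth : ∀ j k, e j + e k ≠ 0 → W j ≤ B.orthogonal (W k)) {i : ι} (hi : W i ≠ ⊥) :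
    ∃ j, e j = -e i := by
  by_contra! h
  apply hi
  rw [eq_bot_iff, ← orthogonal_top_eq_bot hB, ← hW, orthogonal_iSup]
  exact le_iInf fun j => horth i j fun hij => h j (eq_neg_of_add_eq_zero_right hij)

theorem orthogonal_biSup_eq_biSup (hB : B.Nondegenerate) (hW : ⨆ k, W k = ⊤) (π : ι → ι)
    (horth : ∀ j k, k ≠ π j → W j ≤ B.orthogonal (W k)) (p : ι → Prop) :
    B.orthogonal (⨆ k, ⨆ _ : p k, W k) = ⨆ j, ⨆ _ : ¬ p (π j), W j := by
  set T := ⨆ j, ⨆ _ : ¬ p (π j), W j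
  set Q := ⨆ j, ⨆ _ : p (π j), W j
  have hT : T ≤ B.orthogonal (⨆ k, ⨆ _ : p k, W k) := by
    rw [orthogonal_biSup]
    exact iSup₂_le fun j hj => le_iInf₂ fun k hk => horth j k fun h => hj (h ▸ hk)
  have hQ : Q ⊓ B.orthogonal (⨆ k, ⨆ _ : p k, W k) = ⊥ := by
    rw [orthogonal_biSup, eq_bot_iff, ← orthogonal_top_eq_bot hB, ← hW, orthogonal_iSup]
    refine le_iInf fun k => ?_
    by_cases hk : p k
    · exact inf_le_right.trans (iInf₂_le k hk)
    · exact inf_le_left.trans (iSup₂_le fun j hj => horth j k fun h => hk (h ▸ hj))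
  have hTQ : T ⊔ Q = ⊤ := by
    refine eq_top_iff.2 (hW ▸ iSup_le fun j => ?_)
    by_cases hj : p (π j)
    · exact le_sup_of_le_right (le_iSup₂_of_le j hj le_rfl)
    · exact le_sup_of_le_left (le_iSup₂_of_le j hj le_rfl)
  calc B.orthogonal (⨆ k, ⨆ _ : p k, W k)
      = (T ⊔ Q) ⊓ B.orthogonal (⨆ k, ⨆ _ : p k, W k) := by rw [hTQ, top_inf_eq]
    _ = T := by rw [sup_inf_assoc_of_le Q hT, hQ, sup_bot_eq]

theorem orthogonal_biSup_le_eq_biSup_lt_rev (hB : B.Nondegenerate) {n : ℕ}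
    {W : Fin n → Submodule R M} (hW : ⨆ k, W k = ⊤)
    (hpair : ∀ j k, k ≠ j.rev → W j ≤ B.orthogonal (W k)) (i : Fin n) :
    B.orthogonal (⨆ j ≤ i, W j) = ⨆ j < i.rev, W j := by
  rw [orthogonal_biSup_eq_biSup hB hW Fin.rev hpair]
  simp only [not_le, Fin.lt_rev_iff]

theorem orthogonal_biSup_lt_eq_biSup_le_rev (hB : B.Nondegenerate) {n : ℕ}
    {W : Fin n → Submodule R M} (hW : ⨆ k, W k = ⊤)
    (hpair : ∀ j k, k ≠ j.rev → W j ≤ B.orthogonal (W k)) (i : Fin n) :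
    B.orthogonal (⨆ j < i, W j) = ⨆ j ≤ i.rev, W j := by
  rw [orthogonal_biSup_eq_biSup hB hW Fin.rev hpair]
  simp only [not_lt, Fin.le_rev_iff]

end CommRing

theorem le_orthogonal_of_weight_add_ne_zero {V ι : Type*} [AddCommGroup V] [Module ℂ V]
    (σ : BilinForm ℂ V) (lam : ℂˣ →* (V ≃ₗ[ℂ] V))
    (hσ : ∀ (t : ℂˣ) (x y : V), σ (lam t x) (lam t y) = σ x y) {W : ι → Submodule ℂ V}
    {e : ι → ℤ} (hwt : ∀ (t : ℂˣ) (i : ι), ∀ x ∈ W i, lam t x = ((t : ℂ) ^ (e i)) • x)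
    {j k : ι} (hjk : e j + e k ≠ 0) : W j ≤ σ.orthogonal (W k) := fun x hx y hy =>
  σ.apply_eq_zero_of_isometry_of_mul_ne_one (lam (Units.mk0 2 two_ne_zero)).toLinearMap (hσ _)
    (by rwa [Units.val_mk0, ← zpow_add₀ two_ne_zero, Ne, Complex.two_zpow_eq_one_iff, add_comm])
    (hwt _ k y hy) (hwt _ j x hx)

section Field

variable {K V : Type*} [Field K] [AddCommGroup V] [Module K V] [FiniteDimensional K V]
  {B : BilinForm K V} {A : Submodule K V}

theorem finrank_add_finrank_inf_le_of_isotropic (hB : B.Nondegenerate)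
    (hA : A ≤ B.orthogonal A) (X : Submodule K V) :
    finrank K A + finrank K ↥(A ⊓ X) ≤ finrank K X + finrank K ↥(A ⊓ B.orthogonal X) := by
  have hle : A ⊔ B.orthogonal X ≤ B.orthogonal (A ⊓ X) :=
    sup_le (hA.trans (B.orthogonal_le inf_le_left)) (B.orthogonal_le inf_le_right)
  have h₁ := Submodule.finrank_mono hle
  have h₂ := Submodule.finrank_sup_add_finrank_inf_eq A (B.orthogonal X)
  rw [finrank_orthogonal hB] at h₁ h₂
  have h₃ := (A ⊓ X).finrank_le
  have h₄ := X.finrank_le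
  omega

theorem finrank_inf_orthogonal_add_finrank_of_isotropic (hB : B.Nondegenerate) (hB₀ : B.IsRefl)
    (hA : A ≤ B.orthogonal A) (hAV : 2 * finrank K A = finrank K V) (X : Submodule K V) :
    finrank K ↥(A ⊓ B.orthogonal X) + finrank K X = finrank K A + finrank K ↥(A ⊓ X) := by
  have h₁ := finrank_add_finrank_inf_le_of_isotropic hB hA X
  have h₂ := finrank_add_finrank_inf_le_of_isotropic hB hA (B.orthogonal X)
  rw [orthogonal_orthogonal hB hB₀, finrank_orthogonal hB] at h₂
  have h₃ := X.finrank_le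
  omega

theorem finrank_inf_sub_add_finrank_inf_orthogonal_sub (hB : B.Nondegenerate) (hB₀ : B.IsRefl)
    (hA : A ≤ B.orthogonal A) (hAV : 2 * finrank K A = finrank K V) {X Y : Submodule K V}
    (hXY : X ≤ Y) :
    finrank K ↥(A ⊓ Y) - finrank K ↥(A ⊓ X)
        + (finrank K ↥(A ⊓ B.orthogonal X) - finrank K ↥(A ⊓ B.orthogonal Y))
      = finrank K Y - finrank K X := by
  have hX := finrank_inf_orthogonal_add_finrank_of_isotropic hB hB₀ hA hAV X
  have hY := finrank_inf_orthogonal_add_finrank_of_isotropic hB hB₀ hA hAV Y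
  have h₁ := Submodule.finrank_mono (inf_le_inf_left A hXY)
  have h₂ := Submodule.finrank_mono (inf_le_inf_left A (B.orthogonal_le hXY))
  omega

end Field

end BilinForm

end LinearMap

open LinearMap.BilinForm

/-- Let `U` be a finite-dimensional complex symplectic vector space, `λ : ℂˣ → Sp(U,σ)` a
homomorphism with weight decomposition `U = U_{e₀} ⊕ ⋯ ⊕ U_{eₛ}`, `e₀ > ⋯ > eₛ`, and
`Lᵢ := U_{e₀} ⊕ ⋯ ⊕ U_{eᵢ}`. If `A ⊂ U` is Lagrangian and
`dᵢ(A) := dim (A ∩ Lᵢ / A ∩ L_{i-1})`, then `dᵢ(A) + d_{s-i}(A) = dim U_{eᵢ}` for all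
`0 ≤ i ≤ s`. -/
theorem stmt_1 (U : Type*) [AddCommGroup U] [Module ℂ U] [FiniteDimensional ℂ U]
    (σ : U →ₗ[ℂ] U →ₗ[ℂ] ℂ)
    (hAlt : ∀ x : U, σ x x = 0)
    (hNondeg : ∀ x : U, (∀ y : U, σ x y = 0) → x = 0)
    (s : ℕ) (e : Fin (s + 1) → ℤ) (hdec : StrictAnti e)
    (W : Fin (s + 1) → Submodule ℂ U)
    (hne : ∀ i, W i ≠ ⊥)
    (hInt : DirectSum.IsInternal W)
    (lam : ℂˣ →* (U ≃ₗ[ℂ] U))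
    (hSp : ∀ (t : ℂˣ) (x y : U), σ (lam t x) (lam t y) = σ x y)
    (hwt : ∀ (t : ℂˣ) (i : Fin (s + 1)), ∀ x ∈ W i, lam t x = ((t : ℂ) ^ (e i)) • x)
    (A : Submodule ℂ U)
    (hIsoA : ∀ x ∈ A, ∀ y ∈ A, σ x y = 0)
    (hLagr : 2 * Module.finrank ℂ A = Module.finrank ℂ U)
    (L : Fin (s + 1) → Submodule ℂ U)
    (hL : ∀ i, L i = ⨆ j ≤ i, W j)
    (d : Fin (s + 1) → ℕ)
    (hd : ∀ i, d i = Module.finrank ℂ ↥(A ⊓ L i)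
      - Module.finrank ℂ ↥(A ⊓ ⨆ j < i, W j)) :
    ∀ i : Fin (s + 1), d i + d i.rev = Module.finrank ℂ (W i) := by
  intro i
  have hRefl : σ.IsRefl := LinearMap.IsAlt.isRefl hAlt
  have hNd : σ.Nondegenerate := hRefl.nondegenerate_iff_separatingLeft.2 hNondeg
  have hW : ⨆ k, W k = ⊤ := hInt.submodule_iSup_eq_top
  have hweight : ∀ j k, e j + e k ≠ 0 → W j ≤ orthogonal σ (W k) := fun _ _ =>
    le_orthogonal_of_weight_add_ne_zero σ lam hSp hwt
  have hrev : ∀ j, e j.rev = -e j := Fin.apply_rev_eq_neg_of_strictAnti hdec fun j =>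
    exists_eq_neg_of_orthogonal_of_ne_bot hNd hW hweight (hne j)
  have hpair : ∀ j k, k ≠ j.rev → W j ≤ orthogonal σ (W k) := fun j k hk =>
    hweight j k fun h => hk (hdec.injective (by rw [hrev]; omega))
  rw [hd i, hd i.rev, hL, hL, ← orthogonal_biSup_lt_eq_biSup_le_rev hNd hW hpair i,
    ← orthogonal_biSup_le_eq_biSup_lt_rev hNd hW hpair i,
    finrank_inf_sub_add_finrank_inf_orthogonal_sub hNd hRefl (fun y hy x hx => hIsoA x hx y hy)
      hLagr (biSup_mono fun j => le_of_lt),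
    hInt.submodule_iSupIndep.finrank_iSup_le_eq_add i, Nat.add_sub_cancel_left]
end

section
/- Let U be a finite-dimensional complex vector space, q_* a quadratic form on U with kernel K of dimension k. Write det(q_* + q) = Φ_0(q) + Φ_1(q) + ... + Φ_d(q) as a polynomial in the quadratic form q, where Φ_i is homogeneous of degree i (with respect to a fixed basis, d = dim U). Then Φ_i = 0 for all i < k, and there exists a nonzero constant c such that Φ_k(q) = c·det(q|_K) for all quadratic forms q. -/
/-!
Extend a basis of `K = ker Q` by a basis of a complement `W` to a basis of `ℂ^d`. In it the
Gram matrix of `Q` is `0 ⊕ Q|_W`, and `Q|_W` is nondegenerate because `K` is the radical of the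
symmetric form `Q`. Hence in the Gram matrix of `Q + t M` the first `k` rows are divisible by `t`;
pulling out `t ^ k`, the constant term of the remaining determinant is `det (M|_K) * det (Q|_W)`.
The change of basis only multiplies `det (Q + t M)` by the nonzero constant `det P ^ 2`, where
`P` is the matrix of the new basis.
-/

open Matrix Polynomial

namespace Matrix

variable {R ι κ m n : Type*} [CommRing R] [Fintype ι]

def formGram (A : Matrix ι ι R) (v : κ → ι → R) : Matrix κ κ R :=
  of fun i j => v i ⬝ᵥ A *ᵥ v j

theorem formGram_eq_mul_mul_transpose (A : Matrix ι ι R) (v : κ → ι → R) :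
    formGram A v = of v * A * (of v)ᵀ := by
  ext i j
  simp only [formGram, of_apply, mul_apply, transpose_apply, dotProduct, mulVec,
    Finset.mul_sum, Finset.sum_mul]
  rw [Finset.sum_comm]
  exact Finset.sum_congr rfl fun _ _ => Finset.sum_congr rfl fun _ _ => by ring

theorem det_mul_mul_transpose [Fintype κ] [DecidableEq ι] [DecidableEq κ] (e : κ ≃ ι)
    (V : Matrix κ ι R) (A : Matrix ι ι R) :
    det (V * A * Vᵀ) = det (V.submatrix id e) ^ 2 * det A := by
  have : V * A * Vᵀ = V.submatrix id e * A.submatrix e e * (V.submatrix id e)ᵀ := by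
    rw [transpose_submatrix, submatrix_mul_equiv, submatrix_mul_equiv, submatrix_id_id]
  rw [this, det_mul, det_mul, det_transpose, det_submatrix_equiv_self]
  ring

theorem det_mul_mul_transpose_map_add_X_smul [Fintype κ] [DecidableEq ι] [DecidableEq κ]
    (e : κ ≃ ι) (V : Matrix κ ι R) (A B : Matrix ι ι R) :
    det ((V * A * Vᵀ).map C + (X : R[X]) • (V * B * Vᵀ).map C)
      = C (det (V.submatrix id e) ^ 2) * det (A.map C + (X : R[X]) • B.map C) := by
  have : (V * A * Vᵀ).map C + (X : R[X]) • (V * B * Vᵀ).map C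
      = V.map C * (A.map C + (X : R[X]) • B.map C) * (V.map C)ᵀ := by
    simp only [Matrix.map_mul, transpose_map, Matrix.mul_add, Matrix.add_mul, Matrix.mul_smul,
      Matrix.smul_mul]
  rw [this, det_mul_mul_transpose e, submatrix_map, map_pow, RingHom.map_det]
  rfl

theorem det_fromBlocks_zero_map_add_X_smul [Fintype m] [Fintype n] [DecidableEq m]
    [DecidableEq n] (D : Matrix n n R) (B : Matrix (m ⊕ n) (m ⊕ n) R) :
    det ((fromBlocks 0 0 0 D).map C + (X : R[X]) • B.map C)
      = X ^ Fintype.card m * det ((X : R[X]) • (fromBlocks 0 0 B.toBlocks₂₁ B.toBlocks₂₂).map C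
          + (fromBlocks B.toBlocks₁₁ B.toBlocks₁₂ 0 D).map C) := by
  have : (fromBlocks 0 0 0 D).map C + (X : R[X]) • B.map C
      = fromBlocks ((X : R[X]) • 1) 0 0 1 *
          ((X : R[X]) • (fromBlocks 0 0 B.toBlocks₂₁ B.toBlocks₂₂).map C
            + (fromBlocks B.toBlocks₁₁ B.toBlocks₁₂ 0 D).map C) := by
    conv_lhs => rw [← fromBlocks_toBlocks B]
    simp only [fromBlocks_map, fromBlocks_smul, fromBlocks_add, fromBlocks_multiply]
    congr 1 <;> simp [Matrix.smul_mul, add_comm]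
  rw [this, det_mul, det_fromBlocks_zero₂₁, det_smul, det_one, det_one, mul_one, mul_one]

theorem coeff_det_fromBlocks_zero_map_add_X_smul_of_lt [Fintype m] [Fintype n] [DecidableEq m]
    [DecidableEq n] (D : Matrix n n R) (B : Matrix (m ⊕ n) (m ⊕ n) R) {i : ℕ}
    (hi : i < Fintype.card m) :
    (det ((fromBlocks 0 0 0 D).map C + (X : R[X]) • B.map C)).coeff i = 0 := by
  rw [det_fromBlocks_zero_map_add_X_smul, coeff_X_pow_mul', if_neg hi.not_ge]

theorem coeff_det_fromBlocks_zero_map_add_X_smul_card [Fintype m] [Fintype n] [DecidableEq m]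
    [DecidableEq n] (D : Matrix n n R) (B : Matrix (m ⊕ n) (m ⊕ n) R) :
    (det ((fromBlocks 0 0 0 D).map C + (X : R[X]) • B.map C)).coeff (Fintype.card m)
      = det B.toBlocks₁₁ * det D := by
  rw [det_fromBlocks_zero_map_add_X_smul, coeff_X_pow_mul', if_pos le_rfl, Nat.sub_self,
    coeff_det_X_add_C_zero, det_fromBlocks_zero₂₁]

theorem dotProduct_mulVec_eq_zero_of_mem_ker {A : Matrix ι ι R} (hA : A.IsSymm) {x : ι → R}
    (hx : x ∈ LinearMap.ker A.mulVecLin) (y : ι → R) : x ⬝ᵥ A *ᵥ y = 0 := by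
  rw [LinearMap.mem_ker, mulVecLin_apply] at hx
  rw [dotProduct_mulVec, ← mulVec_transpose, hA.eq, hx, zero_dotProduct]

theorem formGram_eq_fromBlocks {A : Matrix ι ι R} (hA : A.IsSymm) (v : m ⊕ n → ι → R)
    (hv : ∀ i, v (Sum.inl i) ∈ LinearMap.ker A.mulVecLin) :
    formGram A v = fromBlocks 0 0 0 (formGram A (v ∘ Sum.inr)) := by
  have hv' : ∀ i, A *ᵥ v (Sum.inl i) = 0 := hv
  ext (i | i) (j | j) <;>
    simp [formGram, dotProduct_mulVec_eq_zero_of_mem_ker hA (hv _), hv']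

theorem dotProduct_formGram_mulVec [Fintype κ] (A : Matrix ι ι R) (w : κ → ι → R)
    (u v : κ → R) :
    u ⬝ᵥ formGram A w *ᵥ v = (∑ i, u i • w i) ⬝ᵥ A *ᵥ ∑ j, v j • w j := by
  rw [formGram_eq_mul_mul_transpose, ← mulVec_mulVec, ← mulVec_mulVec, dotProduct_mulVec,
    mulVec_transpose, vecMul_eq_sum, vecMul_eq_sum]
  rfl

theorem det_fromBlocks_formGram_map_add_X_smul [Fintype m] [Fintype n] [DecidableEq ι]
    [DecidableEq m] [DecidableEq n] {A : Matrix ι ι R} (hA : A.IsSymm) (v : m ⊕ n → ι → R)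
    (hv : ∀ i, v (Sum.inl i) ∈ LinearMap.ker A.mulVecLin) (e : m ⊕ n ≃ ι) (B : Matrix ι ι R) :
    det ((fromBlocks 0 0 0 (formGram A (v ∘ Sum.inr))).map C + (X : R[X]) • (formGram B v).map C)
      = C (det ((of v).submatrix id e) ^ 2) * det (A.map C + (X : R[X]) • B.map C) := by
  rw [← formGram_eq_fromBlocks hA v hv, formGram_eq_mul_mul_transpose,
    formGram_eq_mul_mul_transpose, det_mul_mul_transpose_map_add_X_smul e]

theorem coeff_det_map_add_X_smul_of_lt [Fintype m] [Fintype n] [DecidableEq ι] [DecidableEq m]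
    [DecidableEq n] {A : Matrix ι ι R} (hA : A.IsSymm) (v : m ⊕ n → ι → R)
    (hv : ∀ i, v (Sum.inl i) ∈ LinearMap.ker A.mulVecLin) (e : m ⊕ n ≃ ι) (B : Matrix ι ι R)
    {i : ℕ} (hi : i < Fintype.card m) :
    det ((of v).submatrix id e) ^ 2 * (det (A.map C + (X : R[X]) • B.map C)).coeff i = 0 := by
  rw [← coeff_C_mul, ← det_fromBlocks_formGram_map_add_X_smul hA v hv,
    coeff_det_fromBlocks_zero_map_add_X_smul_of_lt _ _ hi]

theorem coeff_det_map_add_X_smul_card [Fintype m] [Fintype n] [DecidableEq ι] [DecidableEq m]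
    [DecidableEq n] {A : Matrix ι ι R} (hA : A.IsSymm) (v : m ⊕ n → ι → R)
    (hv : ∀ i, v (Sum.inl i) ∈ LinearMap.ker A.mulVecLin) (e : m ⊕ n ≃ ι) (B : Matrix ι ι R) :
    det ((of v).submatrix id e) ^ 2 *
        (det (A.map C + (X : R[X]) • B.map C)).coeff (Fintype.card m)
      = det (formGram B (v ∘ Sum.inl)) * det (formGram A (v ∘ Sum.inr)) := by
  rw [← coeff_C_mul, ← det_fromBlocks_formGram_map_add_X_smul hA v hv,
    coeff_det_fromBlocks_zero_map_add_X_smul_card]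
  rfl

theorem separatingLeft_formGram_of_isCompl_ker [Fintype κ] {A : Matrix ι ι R} (hA : A.IsSymm)
    {W : Submodule R (ι → R)} (hW : IsCompl (LinearMap.ker A.mulVecLin) W)
    (w : Module.Basis κ R W) : (formGram A fun j => (w j : ι → R)).SeparatingLeft := by
  rw [separatingLeft_def]
  intro u hu
  set x : W := ∑ i, u i • w i with hx
  have hx_coe : (x : ι → R) = ∑ i, u i • (w i : ι → R) := by simp [hx]
  have hxW : ∀ y ∈ W, (x : ι → R) ⬝ᵥ A *ᵥ y = 0 := fun y hy => by
    have hy' := congrArg Subtype.val (w.sum_repr ⟨y, hy⟩)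
    simp only [Submodule.coe_sum, Submodule.coe_smul] at hy'
    rw [← hy', hx_coe, ← dotProduct_formGram_mulVec, hu]
  have hxA : A *ᵥ x = 0 := by
    rw [← hA.eq, mulVec_transpose]
    refine dotProduct_eq_zero _ fun y => ?_
    obtain ⟨y₁, hy₁, y₂, hy₂, rfl⟩ :=
      Submodule.mem_sup.1 (hW.sup_eq_top ▸ Submodule.mem_top (x := y))
    rw [LinearMap.mem_ker, mulVecLin_apply] at hy₁
    rw [← dotProduct_mulVec, mulVec_add, dotProduct_add, hy₁, dotProduct_zero, hxW y₂ hy₂,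
      add_zero]
  have hx0 : x = 0 := Subtype.ext (Submodule.disjoint_def.1 hW.disjoint x hxA x.2)
  exact funext (Fintype.linearIndependent_iff.1 w.linearIndependent u hx0)

end Matrix

theorem Module.Basis.isUnit_of_submatrix {F ι κ : Type*} [Field F] [Fintype ι] [Fintype κ]
    [DecidableEq κ] (v : Module.Basis κ F (ι → F)) (e : κ ≃ ι) :
    IsUnit ((Matrix.of ⇑v).submatrix id e) := by
  rw [← linearIndependent_rows_iff_isUnit]
  exact v.linearIndependent.map' (LinearEquiv.funCongrLeft F F e).toLinearMap
    (LinearEquiv.ker _)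

theorem stmt_2_general (d k : ℕ) (Q : Matrix (Fin d) (Fin d) ℂ) (hQ : Q.IsSymm)
    (K : Submodule ℂ (Fin d → ℂ)) (hK : K = LinearMap.ker Q.mulVecLin)
    (b : Module.Basis (Fin k) ℂ K) :
    (∀ M : Matrix (Fin d) (Fin d) ℂ, M.IsSymm → ∀ i < k,
      (Matrix.det (Q.map (Polynomial.C) + (Polynomial.X : Polynomial ℂ) • M.map Polynomial.C)).coeff i = 0) ∧
    ∃ c : ℂ, c ≠ 0 ∧ ∀ M : Matrix (Fin d) (Fin d) ℂ, M.IsSymm →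
      (Matrix.det (Q.map (Polynomial.C) + (Polynomial.X : Polynomial ℂ) • M.map Polynomial.C)).coeff k
        = c * Matrix.det (Matrix.of fun i j : Fin k => (b i : Fin d → ℂ) ⬝ᵥ M.mulVec (b j : Fin d → ℂ)) := by
  classical
  subst hK
  obtain ⟨W, hW⟩ := Submodule.exists_isCompl (LinearMap.ker Q.mulVecLin)
  let w := Module.finBasis ℂ W
  let cb := (b.prod w).map (Submodule.prodEquivOfIsCompl _ _ hW)
  have hcb_inl : ⇑cb ∘ Sum.inl = fun i => (b i : Fin d → ℂ) := funext fun i => by simp [cb]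
  have hcb_inr : ⇑cb ∘ Sum.inr = fun j => (w j : Fin d → ℂ) := funext fun j => by simp [cb]
  have hker : ∀ i, cb (Sum.inl i) ∈ LinearMap.ker Q.mulVecLin := fun i => by simp [cb]
  let e := cb.indexEquiv (Pi.basisFun ℂ (Fin d))
  set s := ((of ⇑cb).submatrix id e).det
  have hs : s ^ 2 ≠ 0 :=
    pow_ne_zero 2 ((isUnit_iff_isUnit_det _).1 (cb.isUnit_of_submatrix e)).ne_zero
  have hQ₂ : (formGram Q (⇑cb ∘ Sum.inr)).det ≠ 0 := hcb_inr ▸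
    separatingLeft_iff_det_ne_zero.1 (separatingLeft_formGram_of_isCompl_ker hQ hW w)
  refine ⟨fun M _ i hi => ?_, (formGram Q (⇑cb ∘ Sum.inr)).det / s ^ 2, div_ne_zero hQ₂ hs,
    fun M _ => ?_⟩
  · have h := coeff_det_map_add_X_smul_of_lt hQ cb hker e M (i := i) (by simpa using hi)
    exact (mul_eq_zero.1 h).resolve_left hs
  · have h := coeff_det_map_add_X_smul_card hQ cb hker e M
    rw [Fintype.card_fin, hcb_inl] at h
    rw [div_mul_eq_mul_div, eq_div_iff hs, mul_comm, h]
    exact mul_comm _ _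

/-- Proposition on the discriminant of quadratic forms: if `q_*` has kernel `K` of
dimension `k`, then the homogeneous components `Φ_i` of `q ↦ det(q_* + q)` vanish for
`i < k`, and `Φ_k(q) = c·det(q|_K)` for some fixed `c ≠ 0`. Quadratic forms on `ℂ^d` are
represented by symmetric matrices, and `Φ_i(q)` is the coefficient of `t^i` in
`det(q_* + t·q)`. -/
theorem stmt_2 (d k : ℕ) (Q : Matrix (Fin d) (Fin d) ℂ) (hQ : Q.IsSymm)
    (K : Submodule ℂ (Fin d → ℂ)) (hK : K = LinearMap.ker Q.mulVecLin)
    (hk : Module.finrank ℂ K = k)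
    (b : Module.Basis (Fin k) ℂ K) :
    (∀ M : Matrix (Fin d) (Fin d) ℂ, M.IsSymm → ∀ i < k,
      (Matrix.det (Q.map (Polynomial.C) + (Polynomial.X : Polynomial ℂ) • M.map Polynomial.C)).coeff i = 0) ∧
    ∃ c : ℂ, c ≠ 0 ∧ ∀ M : Matrix (Fin d) (Fin d) ℂ, M.IsSymm →
      (Matrix.det (Q.map (Polynomial.C) + (Polynomial.X : Polynomial ℂ) • M.map Polynomial.C)).coeff k
        = c * Matrix.det (Matrix.of fun i j : Fin k => (b i : Fin d → ℂ) ⬝ᵥ M.mulVec (b j : Fin d → ℂ)) :=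
  stmt_2_general d k Q hQ K hK b
end

section
/- Let U be a d-dimensional complex vector space and q_* a quadratic form on U with kernel K of dimension k. Let V_K be the subspace of quadratic forms q whose restriction to K vanishes. Then there exists a nonzero constant c such that the degree-2k homogeneous component Φ_{2k} of det(q_* + q) satisfies Φ_{2k}(q) = c·det(q_*^∨ restricted to q̃(K)) for all q ∈ V_K. -/
/-!
Write `Q` for `q_*` and `M` for `q`. Extend a basis `k_i` of `K = ker Q` by vectors `w_s` to a
basis of the whole space, and let `P = [K | W]` be the matrix with these columns. Then
`Pᵀ Q P = [[0, 0], [0, Q₁]]` with `Q₁` invertible, and `Pᵀ M P = [[0, B], [Bᵀ, D]]` because `M`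
vanishes on `K`. Scaling the first `k` coordinates by `t` shows that the coefficient of `t^(2k)`
in `det (Pᵀ (Q + t M) P) = det (P Pᵀ) · det (Q + t M)` is `det [[0, B], [Bᵀ, Q₁]]`, which equals
`(-1)^k det Q₁ · det (B Q₁⁻¹ Bᵀ)` by the Schur complement. Finally, `B Q₁⁻¹ Bᵀ` is the Gram matrix
of the dual form on the vectors `M k_i`, since these are `Q y_i` with `y_i = W Q₁⁻¹ Bᵀ e_i`.
-/

open Matrix Polynomial

namespace Matrix

section Symmetric

variable {R n m l : Type*} [CommSemiring R] [Fintype n] {A : Matrix n n R}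

theorem IsSymm.dotProduct_mulVec_comm (hA : A.IsSymm) (x y : n → R) :
    x ⬝ᵥ A *ᵥ y = y ⬝ᵥ A *ᵥ x := by
  rw [dotProduct_mulVec, ← mulVec_transpose, hA.eq, dotProduct_comm]

theorem IsSymm.transpose_transpose_mul_mul (hA : A.IsSymm) (B : Matrix n m R) (C : Matrix n l R) :
    (Bᵀ * A * C)ᵀ = Cᵀ * A * B := by
  rw [transpose_mul, transpose_mul, transpose_transpose, hA.eq, Matrix.mul_assoc]

theorem IsSymm.transpose_mul_mul (hA : A.IsSymm) (B : Matrix n m R) : (Bᵀ * A * B).IsSymm :=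
  hA.transpose_transpose_mul_mul B B

theorem IsSymm.transpose_mul_eq_zero {B : Matrix n m R} (hA : A.IsSymm) (hAB : A * B = 0) :
    Bᵀ * A = 0 := by
  rw [← hA.eq, ← transpose_mul, hAB, transpose_zero]

end Symmetric

theorem IsSymm.dotProduct_mulVec_eq_zero_of_forall_mem {F n : Type*} [Field F] [NeZero (2 : F)]
    [Fintype n] {M : Matrix n n F} (hM : M.IsSymm) {S : Submodule F (n → F)}
    (hS : ∀ x ∈ S, x ⬝ᵥ M *ᵥ x = 0) {x y : n → F} (hx : x ∈ S) (hy : y ∈ S) :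
    x ⬝ᵥ M *ᵥ y = 0 := by
  have hxy := hS (x + y) (S.add_mem hx hy)
  simp only [mulVec_add, dotProduct_add, add_dotProduct, hS x hx, hS y hy,
    hM.dotProduct_mulVec_comm y x] at hxy
  have h2 : (2 : F) * (x ⬝ᵥ M *ᵥ y) = 0 := by linear_combination hxy
  exact (mul_eq_zero.mp h2).resolve_left two_ne_zero

theorem transpose_mul_mul_apply {R n ι κ : Type*} [CommSemiring R] [Fintype n]
    (A : Matrix n ι R) (M : Matrix n n R) (B : Matrix n κ R) (i : ι) (j : κ) :
    (Aᵀ * M * B) i j = Aᵀ i ⬝ᵥ M *ᵥ Bᵀ j := by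
  rw [mul_apply', dotProduct_mulVec]
  rfl

theorem transpose_fromCols_mul_mul_fromCols {R n ι κ : Type*} [CommSemiring R] [Fintype n]
    (A : Matrix n n R) (K : Matrix n ι R) (W : Matrix n κ R) :
    (fromCols K W)ᵀ * A * fromCols K W =
      fromBlocks (Kᵀ * A * K) (Kᵀ * A * W) (Wᵀ * A * K) (Wᵀ * A * W) := by
  rw [transpose_fromCols, fromRows_mul, fromRows_mul_fromCols]

theorem eq_zero_of_mul_eq_one_of_mulVec_eq_zero {R m n : Type*} [CommSemiring R] [Fintype m]
    [Fintype n] [DecidableEq n] {A : Matrix m n R} {A' : Matrix n m R} (h : A' * A = 1)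
    {v : n → R} (hv : A *ᵥ v = 0) : v = 0 := by
  rw [← one_mulVec v, ← h, ← mulVec_mulVec, hv, mulVec_zero]

theorem det_transpose_mul_mul_of_mul_eq_one {R m n : Type*} [CommRing R] [Fintype m] [Fintype n]
    [DecidableEq m] [DecidableEq n] {P : Matrix n m R} {P' : Matrix m n R} (h₁ : P * P' = 1)
    (h₂ : P' * P = 1) (A : Matrix n n R) : (Pᵀ * A * P).det = (P * Pᵀ).det * A.det := by
  have h₁' : Pᵀ * P'ᵀ = 1 := by rw [← transpose_mul, h₂, transpose_one]
  have h₂' : P'ᵀ * Pᵀ = 1 := by rw [← transpose_mul, h₁, transpose_one]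
  rw [Matrix.mul_assoc, det_comm' h₁' h₂', Matrix.mul_assoc, det_mul, mul_comm]

theorem det_mul_transpose_ne_zero_of_mul_eq_one {F m n : Type*} [Field F] [Fintype m]
    [Fintype n] [DecidableEq m] [DecidableEq n] {P : Matrix n m F} {P' : Matrix m n F}
    (h₁ : P * P' = 1) (h₂ : P' * P = 1) : (P * Pᵀ).det ≠ 0 := by
  refine (isUnit_det_of_right_inverse (B := P'ᵀ * P') ?_).ne_zero
  rw [Matrix.mul_assoc, ← Matrix.mul_assoc Pᵀ, ← transpose_mul, h₂, transpose_one,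
    Matrix.one_mul, h₁]

theorem det_fromBlocks_zero₁₁ {R ι κ : Type*} [CommRing R] [Fintype ι] [Fintype κ]
    [DecidableEq ι] [DecidableEq κ] (B : Matrix ι κ R) (B' : Matrix κ ι R) {D : Matrix κ κ R}
    (hD : IsUnit D.det) :
    (fromBlocks 0 B B' D).det = (-1) ^ Fintype.card ι * D.det * (B * D⁻¹ * B').det := by
  have := D.invertibleOfIsUnitDet hD
  rw [det_fromBlocks₂₂, invOf_eq_nonsing_inv, zero_sub, det_neg, mul_left_comm, mul_assoc]

theorem coeff_det_fromBlocks_pencil {R ι κ : Type*} [CommRing R] [Fintype ι] [Fintype κ]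
    [DecidableEq ι] [DecidableEq κ] (A D : Matrix κ κ R) (B : Matrix ι κ R) (B' : Matrix κ ι R) :
    ((fromBlocks 0 0 0 A).map C + (X : R[X]) • (fromBlocks 0 B B' D).map C).det.coeff
        (2 * Fintype.card ι) = (fromBlocks 0 B B' A).det := by
  set N : Matrix (ι ⊕ κ) (ι ⊕ κ) R[X] :=
    fromBlocks 0 (B.map C) (B'.map C) (A.map C + (X : R[X]) • D.map C)
  set S : Matrix (ι ⊕ κ) (ι ⊕ κ) R[X] := fromBlocks ((X : R[X]) • 1) 0 0 1
  -- scaling the `ι`-coordinates by `X` pulls the factor `X` out of the off-diagonal blocks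
  have hfac :
      (fromBlocks 0 0 0 A).map C + (X : R[X]) • (fromBlocks 0 B B' D).map C = S * N * S := by
    simp [N, S, fromBlocks_map, fromBlocks_smul, fromBlocks_add, fromBlocks_multiply,
      Matrix.smul_mul, Matrix.mul_smul]
  have hS : S.det = X ^ Fintype.card ι := by simp [S]
  have hN : N.map (evalRingHom 0) = fromBlocks 0 B B' A := by
    ext (i | i) (j | j) <;> simp [N]
  rw [hfac, det_mul, det_mul, hS, mul_comm, ← mul_assoc, ← pow_add, ← two_mul,
    coeff_X_pow_mul', if_pos le_rfl, Nat.sub_self, coeff_zero_eq_eval_zero, ← coe_evalRingHom,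
    RingHom.map_det, RingHom.mapMatrix_apply, hN]

theorem det_pencil_congr {R m n : Type*} [CommRing R] [Fintype m] [Fintype n]
    [DecidableEq m] [DecidableEq n] {P : Matrix n m R} {P' : Matrix m n R} (h₁ : P * P' = 1)
    (h₂ : P' * P = 1) (A B : Matrix n n R) :
    ((Pᵀ * A * P).map C + (X : R[X]) • (Pᵀ * B * P).map C).det =
      C (P * Pᵀ).det * (A.map C + (X : R[X]) • B.map C).det := by
  have hmap : (Pᵀ * A * P).map C + (X : R[X]) • (Pᵀ * B * P).map C =
      (P.map C)ᵀ * (A.map C + (X : R[X]) • B.map C) * P.map C := by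
    simp only [Matrix.map_mul, transpose_map, Matrix.mul_add, Matrix.add_mul, Matrix.mul_smul,
      Matrix.smul_mul]
  have h₁' : P.map C * P'.map C = 1 := by rw [← Matrix.map_mul, h₁]; simp
  have h₂' : P'.map C * P.map C = 1 := by rw [← Matrix.map_mul, h₂]; simp
  rw [hmap, det_transpose_mul_mul_of_mul_eq_one h₁' h₂', ← transpose_map, ← Matrix.map_mul,
    ← RingHom.mapMatrix_apply, ← RingHom.map_det]

section Frame

variable {F n ι κ : Type*} [Field F] [Fintype n] {Q M : Matrix n n F} {K : Matrix n ι F}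
  {W : Matrix n κ F}

theorem transpose_fromCols_mul_mul_fromCols_of_mul_eq_zero (hQ : Q.IsSymm) (hQK : Q * K = 0) :
    (fromCols K W)ᵀ * Q * fromCols K W = fromBlocks 0 0 0 (Wᵀ * Q * W) := by
  rw [transpose_fromCols_mul_mul_fromCols, hQ.transpose_mul_eq_zero hQK, Matrix.mul_assoc Wᵀ,
    hQK, Matrix.zero_mul, Matrix.zero_mul, Matrix.mul_zero]

theorem transpose_fromCols_mul_mul_fromCols_of_isotropic (hM : M.IsSymm)
    (hMK : Kᵀ * M * K = 0) :
    (fromCols K W)ᵀ * M * fromCols K W =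
      fromBlocks 0 (Kᵀ * M * W) (Kᵀ * M * W)ᵀ (Wᵀ * M * W) := by
  rw [transpose_fromCols_mul_mul_fromCols, hMK, hM.transpose_transpose_mul_mul]

variable [Fintype ι] [Fintype κ] {P' : Matrix (ι ⊕ κ) n F} [DecidableEq n]

theorem mul_mul_eq_of_transpose_mul_mul_eq (h₁ : fromCols K W * P' = 1) (hQ : Q.IsSymm)
    (hQK : Q * K = 0) (hMK : Kᵀ * M * K = 0) {Z : Matrix κ ι F}
    (hZ : Wᵀ * Q * W * Z = Wᵀ * M * K) : Q * (W * Z) = M * K := by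
  have h : (fromCols K W)ᵀ * (Q * (W * Z)) = (fromCols K W)ᵀ * (M * K) := by
    rw [transpose_fromCols, fromRows_mul, fromRows_mul, ← Matrix.mul_assoc,
      hQ.transpose_mul_eq_zero hQK, Matrix.zero_mul, ← Matrix.mul_assoc Kᵀ, hMK,
      ← Matrix.mul_assoc, ← Matrix.mul_assoc, hZ, ← Matrix.mul_assoc]
  have h₁' : P'ᵀ * (fromCols K W)ᵀ = 1 := by rw [← transpose_mul, h₁, transpose_one]
  calc Q * (W * Z) = P'ᵀ * (fromCols K W)ᵀ * (Q * (W * Z)) := by rw [h₁', Matrix.one_mul]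
    _ = M * K := by rw [Matrix.mul_assoc, h, ← Matrix.mul_assoc, h₁', Matrix.one_mul]

variable [DecidableEq κ]

theorem gram_dual_eq_mul_inv_mul_transpose (h₁ : fromCols K W * P' = 1) (hQ : Q.IsSymm)
    (hQK : Q * K = 0) (hM : M.IsSymm) (hMK : Kᵀ * M * K = 0) (hQ₁ : (Wᵀ * Q * W).det ≠ 0)
    (Bdual : (n → F) → (n → F) → F) (hBdual : ∀ u v, Bdual (Q *ᵥ u) (Q *ᵥ v) = u ⬝ᵥ Q *ᵥ v) :
    of (fun i j => Bdual (M *ᵥ Kᵀ i) (M *ᵥ Kᵀ j)) =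
      Kᵀ * M * W * (Wᵀ * Q * W)⁻¹ * (Kᵀ * M * W)ᵀ := by
  have hQ₁' : IsUnit (Wᵀ * Q * W).det := isUnit_iff_ne_zero.mpr hQ₁
  obtain ⟨Z, hZ⟩ : ∃ Z, Z = (Wᵀ * Q * W)⁻¹ * (Kᵀ * M * W)ᵀ := ⟨_, rfl⟩
  -- the columns `y_i` of `W * Z` solve `Q y_i = M k_i`, so `Bdual (M k_i) (M k_j) = y_i ⬝ Q y_j`
  have hY : Q * (W * Z) = M * K := by
    refine mul_mul_eq_of_transpose_mul_mul_eq h₁ hQ hQK hMK ?_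
    rw [hZ, ← Matrix.mul_assoc, mul_nonsing_inv _ hQ₁', Matrix.one_mul,
      hM.transpose_transpose_mul_mul]
  have hYQY : (W * Z)ᵀ * Q * (W * Z) = Kᵀ * M * W * (Wᵀ * Q * W)⁻¹ * (Kᵀ * M * W)ᵀ := by
    calc (W * Z)ᵀ * Q * (W * Z) = Zᵀ * (Wᵀ * Q * W) * Z := by
          simp only [transpose_mul, Matrix.mul_assoc]
      _ = Kᵀ * M * W * (Wᵀ * Q * W)⁻¹ * ((Wᵀ * Q * W) * (Wᵀ * Q * W)⁻¹) * (Kᵀ * M * W)ᵀ := by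
          rw [hZ, transpose_mul, transpose_transpose, (hQ.transpose_mul_mul W).inv.eq]
          simp only [Matrix.mul_assoc]
      _ = _ := by rw [mul_nonsing_inv _ hQ₁', Matrix.mul_one]
  have hcol : ∀ i, M *ᵥ Kᵀ i = Q *ᵥ (W * Z)ᵀ i := fun i => congrArg (fun N => Nᵀ i) hY.symm
  ext i j
  rw [of_apply, hcol, hcol, hBdual, ← transpose_mul_mul_apply, hYQY]

variable [DecidableEq ι]

theorem det_transpose_mul_mul_ne_zero (h₁ : fromCols K W * P' = 1) (h₂ : P' * fromCols K W = 1)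
    (hQ : Q.IsSymm) (hQK : Q * K = 0) (hker : ∀ x, Q *ᵥ x = 0 → ∃ y, K *ᵥ y = x) :
    (Wᵀ * Q * W).det ≠ 0 := by
  rw [Ne, ← exists_mulVec_eq_zero_iff]
  rintro ⟨z, hz, hQ₁z⟩
  have h₁' : P'ᵀ * (fromCols K W)ᵀ = 1 := by rw [← transpose_mul, h₁, transpose_one]
  have hQWz : Q *ᵥ (W *ᵥ z) = 0 := by
    refine eq_zero_of_mul_eq_one_of_mulVec_eq_zero h₁' ?_
    rw [mulVec_mulVec, mulVec_mulVec, transpose_fromCols, fromRows_mul, fromRows_mul,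
      hQ.transpose_mul_eq_zero hQK, fromRows_mulVec, hQ₁z]
    simp
  obtain ⟨y, hy⟩ := hker _ hQWz
  have h : Sum.elim y (-z) = 0 := by
    refine eq_zero_of_mul_eq_one_of_mulVec_eq_zero h₂ ?_
    rw [fromCols_mulVec_sumElim, mulVec_neg, hy, add_neg_cancel]
  exact hz (neg_eq_zero.mp (congrArg (· ∘ Sum.inr) h))

theorem coeff_det_pencil_mul_det (h₁ : fromCols K W * P' = 1) (h₂ : P' * fromCols K W = 1)
    (hQ : Q.IsSymm) (hQK : Q * K = 0) (hM : M.IsSymm) (hMK : Kᵀ * M * K = 0) :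
    (Q.map C + (X : F[X]) • M.map C).det.coeff (2 * Fintype.card ι) *
        (fromCols K W * (fromCols K W)ᵀ).det =
      (fromBlocks 0 (Kᵀ * M * W) (Kᵀ * M * W)ᵀ (Wᵀ * Q * W)).det := by
  have h := congrArg (coeff · (2 * Fintype.card ι)) (det_pencil_congr h₁ h₂ Q M)
  simp only [transpose_fromCols_mul_mul_fromCols_of_mul_eq_zero hQ hQK,
    transpose_fromCols_mul_mul_fromCols_of_isotropic hM hMK, coeff_det_fromBlocks_pencil,
    coeff_C_mul] at h
  rw [h, mul_comm]

end Frame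

theorem exists_fromCols_mul_eq_one {F n ι : Type*} [Field F] [Fintype n] [DecidableEq n]
    [Fintype ι] [DecidableEq ι] {K : Submodule F (n → F)} (b : Module.Basis ι F K) :
    ∃ (m : ℕ) (W : Matrix n (Fin m) F) (P' : Matrix (ι ⊕ Fin m) n F),
      fromCols (of fun i => (b i : n → F))ᵀ W * P' = 1 ∧
        P' * fromCols (of fun i => (b i : n → F))ᵀ W = 1 := by
  obtain ⟨V, hV⟩ := Submodule.exists_isCompl K
  let bV := Module.finBasis F V
  let 𝔅 := (b.prod bV).map (Submodule.prodEquivOfIsCompl K V hV)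
  have hP : (Pi.basisFun F n).toMatrix 𝔅 =
      fromCols (of fun i => (b i : n → F))ᵀ (of fun s => (bV s : n → F))ᵀ := by
    ext r (i | s) <;> simp [𝔅, Module.Basis.toMatrix_apply]
  exact ⟨_, _, 𝔅.toMatrix (Pi.basisFun F n), hP ▸ (Pi.basisFun F n).toMatrix_mul_toMatrix_flip 𝔅,
    hP ▸ 𝔅.toMatrix_mul_toMatrix_flip (Pi.basisFun F n)⟩

end Matrix

open Matrix

theorem exists_coeff_det_pencil_eq_mul_det_gram_dual {F n ι : Type*} [Field F] [NeZero (2 : F)]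
    [Fintype n] [DecidableEq n] [Fintype ι] [DecidableEq ι] {Q : Matrix n n F} (hQ : Q.IsSymm)
    {K : Submodule F (n → F)} (hK : K = LinearMap.ker Q.mulVecLin) (b : Module.Basis ι F K)
    (Bdual : (n → F) → (n → F) → F) (hBdual : ∀ u v, Bdual (Q *ᵥ u) (Q *ᵥ v) = u ⬝ᵥ Q *ᵥ v) :
    ∃ c : F, c ≠ 0 ∧ ∀ M : Matrix n n F, M.IsSymm → (∀ x ∈ K, x ⬝ᵥ M *ᵥ x = 0) →
      (Q.map C + (X : F[X]) • M.map C).det.coeff (2 * Fintype.card ι) =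
        c * (of fun i j => Bdual (M *ᵥ b i) (M *ᵥ b j)).det := by
  obtain ⟨m, Wb, P', h₁, h₂⟩ := exists_fromCols_mul_eq_one b
  set Kb : Matrix n ι F := (of fun i => (b i : n → F))ᵀ
  have hmem : ∀ x, x ∈ K ↔ Q *ᵥ x = 0 := fun x => by
    rw [hK, LinearMap.mem_ker, mulVecLin_apply]
  have hQK : Q * Kb = 0 := by
    ext r i
    exact congrFun ((hmem _).1 (b i).2) r
  have hker : ∀ x, Q *ᵥ x = 0 → ∃ y, Kb *ᵥ y = x := by
    intro x hx
    refine ⟨b.repr ⟨x, (hmem x).2 hx⟩, ?_⟩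
    have h := congrArg Subtype.val (b.sum_repr ⟨x, (hmem x).2 hx⟩)
    rw [Submodule.coe_sum] at h
    rw [mulVec_transpose, vecMul_eq_sum]
    exact h
  have hQ₁ := det_transpose_mul_mul_ne_zero h₁ h₂ hQ hQK hker
  have hPdet := det_mul_transpose_ne_zero_of_mul_eq_one h₁ h₂
  refine ⟨(-1) ^ Fintype.card ι * (Wbᵀ * Q * Wb).det / (fromCols Kb Wb * (fromCols Kb Wb)ᵀ).det,
    by simp [hQ₁, hPdet], fun M hM hM₀ => ?_⟩
  have hMK : Kbᵀ * M * Kb = 0 := by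
    ext i j
    rw [transpose_mul_mul_apply]
    exact hM.dotProduct_mulVec_eq_zero_of_forall_mem hM₀ (b i).2 (b j).2
  have hcoeff := coeff_det_pencil_mul_det h₁ h₂ hQ hQK hM hMK
  rw [det_fromBlocks_zero₁₁ _ _ (isUnit_iff_ne_zero.mpr hQ₁),
    ← gram_dual_eq_mul_inv_mul_transpose h₁ hQ hQK hM hMK hQ₁ Bdual hBdual] at hcoeff
  rw [div_mul_eq_mul_div, eq_div_iff hPdet, hcoeff]
  rfl

theorem stmt_3_general (d k : ℕ) (Q : Matrix (Fin d) (Fin d) ℂ) (hQ : Q.IsSymm)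
    (K : Submodule ℂ (Fin d → ℂ)) (hK : K = LinearMap.ker Q.mulVecLin)
    (b : Module.Basis (Fin k) ℂ K)
    (Bdual : (Fin d → ℂ) → (Fin d → ℂ) → ℂ)
    (hBdual : ∀ u v : Fin d → ℂ, Bdual (Q.mulVec u) (Q.mulVec v) = u ⬝ᵥ Q.mulVec v) :
    ∃ c : ℂ, c ≠ 0 ∧ ∀ M : Matrix (Fin d) (Fin d) ℂ, M.IsSymm →
      (∀ x ∈ K, x ⬝ᵥ M.mulVec x = 0) →
      (Matrix.det (Q.map (Polynomial.C) + (Polynomial.X : Polynomial ℂ) • M.map Polynomial.C)).coeff (2 * k)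
        = c * Matrix.det (Matrix.of fun i j : Fin k =>
            Bdual (M.mulVec (b i : Fin d → ℂ)) (M.mulVec (b j : Fin d → ℂ))) := by
  simpa only [Fintype.card_fin] using
    exists_coeff_det_pencil_eq_mul_det_gram_dual hQ hK b Bdual hBdual

/-- If `q_*` has kernel `K` of dimension `k` and `q` is a quadratic form whose restriction
to `K` vanishes, then the degree-`2k` homogeneous component of `det(q_* + q)` equals
`c·det(q_*^∨|_{q̃(K)})` for a fixed nonzero constant `c`. The dual form `q_*^∨` is
represented by any bilinear function `Bdual` satisfying
`Bdual(q̃_*(u), q̃_*(v)) = u ⬝ᵥ q̃_*(v)`, and the determinant of its restriction to `q̃(K)`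
is computed as the Gram determinant on the images `q̃(b_i)` of a basis of `K`. -/
theorem stmt_3 (d k : ℕ) (Q : Matrix (Fin d) (Fin d) ℂ) (hQ : Q.IsSymm)
    (K : Submodule ℂ (Fin d → ℂ)) (hK : K = LinearMap.ker Q.mulVecLin)
    (hk : Module.finrank ℂ K = k)
    (b : Module.Basis (Fin k) ℂ K)
    (Bdual : (Fin d → ℂ) → (Fin d → ℂ) → ℂ)
    (hBdual : ∀ u v : Fin d → ℂ, Bdual (Q.mulVec u) (Q.mulVec v) = u ⬝ᵥ Q.mulVec v) :
    ∃ c : ℂ, c ≠ 0 ∧ ∀ M : Matrix (Fin d) (Fin d) ℂ, M.IsSymm →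
      (∀ x ∈ K, x ⬝ᵥ M.mulVec x = 0) →
      (Matrix.det (Q.map (Polynomial.C) + (Polynomial.X : Polynomial ℂ) • M.map Polynomial.C)).coeff (2 * k)
        = c * Matrix.det (Matrix.of fun i j : Fin k =>
            Bdual (M.mulVec (b i : Fin d → ℂ)) (M.mulVec (b j : Fin d → ℂ))) :=
  stmt_3_general d k Q hQ K hK b Bdual hBdual
end

section
/- Let U be a finite-dimensional complex vector space, q_* a quadratic form with 2-dimensional kernel K, q a quadratic form with q|_K = 0, and v ∈ K such that the bilinear pairing (e(q;v), e(q;w))_{q_*} vanishes for all w ∈ K, where e(q;w) satisfies q̃(w) = q̃_*(e(q;w)). Then (w, e(q;v))_q = 0 for all w ∈ K; consequently q(e(q;v)) does not depend on the choice of representative e(q;v) modulo K. -/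
open Matrix

lemma symm_swap {d : ℕ} {A : Matrix (Fin d) (Fin d) ℂ} (hA : A.IsSymm)
    (x y : Fin d → ℂ) : x ⬝ᵥ A.mulVec y = y ⬝ᵥ A.mulVec x := by
  rw [dotProduct_mulVec, ← mulVec_transpose, hA.eq, dotProduct_comm]

/-- Let `q_*` be a quadratic form with 2-dimensional kernel `K`, `q` a quadratic form with
`q|_K = 0`, and `v ∈ K` such that `(e(q;v), e(q;w))_{q_*} = 0` for all `w ∈ K`, where
`e(q;w)` satisfies `q̃_*(e(q;w)) = q̃(w)`. Then `(w, e(q;v))_q = 0` for all `w ∈ K`, and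
consequently `q(e(q;v))` does not depend on the choice of representative `e(q;v)`
(any two solutions of `q̃_*(x) = q̃(v)` differ by an element of `K = ker q̃_*`). -/
theorem stmt_6 (d : ℕ) (Q : Matrix (Fin d) (Fin d) ℂ) (hQ : Q.IsSymm)
    (K : Submodule ℂ (Fin d → ℂ)) (hK : K = LinearMap.ker Q.mulVecLin)
    (hk : Module.finrank ℂ K = 2)
    (M : Matrix (Fin d) (Fin d) ℂ) (hM : M.IsSymm)
    (hMK : ∀ x ∈ K, x ⬝ᵥ M.mulVec x = 0)
    (v : Fin d → ℂ) (hv : v ∈ K)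
    (e : (Fin d → ℂ) → (Fin d → ℂ))
    (he : ∀ w ∈ K, Q.mulVec (e w) = M.mulVec w)
    (hutile : ∀ w ∈ K, (e v) ⬝ᵥ Q.mulVec (e w) = 0) :
    (∀ w ∈ K, w ⬝ᵥ M.mulVec (e v) = 0) ∧
    (∀ e₁ e₂ : Fin d → ℂ, Q.mulVec e₁ = M.mulVec v → Q.mulVec e₂ = M.mulVec v →
      e₁ ⬝ᵥ M.mulVec e₁ = e₂ ⬝ᵥ M.mulVec e₂) := by
  -- polarization on K for M
  have hpol : ∀ x ∈ K, ∀ y ∈ K, x ⬝ᵥ M.mulVec y = 0 := by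
    intro x hx y hy
    have h1 := hMK (x + y) (K.add_mem hx hy)
    have h2 := hMK x hx
    have h3 := hMK y hy
    have hs := symm_swap hM x y
    simp only [mulVec_add, dotProduct_add, add_dotProduct] at h1
    rw [h2, h3] at h1
    rw [← hs] at h1
    ring_nf at h1 ⊢
    linear_combination h1 / 2
  have part1 : ∀ w ∈ K, w ⬝ᵥ M.mulVec (e v) = 0 := by
    intro w hw
    rw [symm_swap hM, ← he w hw]
    exact hutile w hw
  refine ⟨part1, ?_⟩
  intro e₁ e₂ h1 h2
  -- e₁ - e₂ ∈ K, e₁ - e v ∈ K, e₂ - e v ∈ K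
  have hev : Q.mulVec (e v) = M.mulVec v := he v hv
  have memK : ∀ x : Fin d → ℂ, Q.mulVec x = M.mulVec v → x - e v ∈ K := by
    intro x hx
    rw [hK, LinearMap.mem_ker]
    simp [mulVec_sub, hx, hev]
  have k1 := memK e₁ h1
  have k2 := memK e₂ h2
  have kd : e₁ - e₂ ∈ K := by
    have := K.sub_mem k1 k2
    simpa using this
  -- e₁ M e₁ - e₂ M e₂ = (e₁-e₂) M (e₁+e₂)
  have key : (e₁ - e₂) ⬝ᵥ M.mulVec (e₁ + e₂) = 0 := by
    have h₁ : (e₁ - e₂) ⬝ᵥ M.mulVec (e₁ - e v) = 0 := hpol _ kd _ k1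
    have h₂ : (e₁ - e₂) ⬝ᵥ M.mulVec (e₂ - e v) = 0 := hpol _ kd _ k2
    have h₃ : (e₁ - e₂) ⬝ᵥ M.mulVec (e v) = 0 := part1 _ kd
    have : e₁ + e₂ = (e₁ - e v) + (e₂ - e v) + (2 : ℂ) • e v := by
      ext i; simp; ring
    rw [this]
    simp only [mulVec_add, dotProduct_add, mulVec_smul, dotProduct_smul, h₁, h₂, h₃]
    simp
  have hs := symm_swap hM e₁ e₂
  simp only [sub_dotProduct, mulVec_add, dotProduct_add] at key
  linear_combination key - hs
end

section
/- Let V ⊂ gl₃(ℂ) be a 2-dimensional subspace all of whose nonzero elements have rank 2, and define K(V) ⊂ ℙ² to be the set of kernels of the nonzero elements of V (each kernel is a line in ℂ³, hence a point of ℙ²). For the three model pencils: K(V_l) is the line V(x), K(V_c) is the smooth conic V(x²−yz), and K(V_p) is the single point V(x,y). In particular the GL₃(ℂ)×GL₃(ℂ)-orbits of V_l, V_c, V_p are pairwise distinct. -/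
/-! A nonzero element of a model pencil is `a • X + b • Y` with `(a, b) ≠ 0`, and its kernel is
spanned by an explicit vector `k`: the equations `A *ᵥ w = 0` force `k ⨯₃ w = 0`, i.e. `w ∥ k`.
For `V_c` the vector is `k = (ab, -b², -a²)`, which sweeps out the conic.

The pair `(M, N)` sends `ker A` to its preimage under `N`, so `K` is transported by a bijection
on lines. Thus the one-point set `K(V_p)` is not equivalent to the others; and `K(V_c)` is not the
image of `K(V_l)`, since the preimage under `N` of the plane `x = 0` is a plane, whereas the conic
contains `e₁`, `e₂` and `(1, -1, -1)`, which span `ℂ³`. -/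

open Matrix

noncomputable def matF : Matrix (Fin 3) (Fin 3) ℂ := !![0,1,0; 1,0,0; 0,0,0]
noncomputable def matG : Matrix (Fin 3) (Fin 3) ℂ := !![0,0,1; 0,0,0; 1,0,0]
noncomputable def matH : Matrix (Fin 3) (Fin 3) ℂ := !![1,0,0; 0,0,1; 0,0,0]

noncomputable def pencilVl : Submodule ℂ (Matrix (Fin 3) (Fin 3) ℂ) :=
  Submodule.span ℂ {matF, matG}
noncomputable def pencilVc : Submodule ℂ (Matrix (Fin 3) (Fin 3) ℂ) :=
  Submodule.span ℂ {matF, matH}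
noncomputable def pencilVp : Submodule ℂ (Matrix (Fin 3) (Fin 3) ℂ) :=
  Submodule.span ℂ {matFᵀ, matHᵀ}

def pencilEquiv (V W : Submodule ℂ (Matrix (Fin 3) (Fin 3) ℂ)) : Prop :=
  ∃ M N : Matrix (Fin 3) (Fin 3) ℂ, IsUnit M ∧ IsUnit N ∧
    W = V.map ((LinearMap.mulLeft ℂ M).comp (LinearMap.mulRight ℂ N))

/-- The set `K(V) ⊂ ℙ²` of kernels of the nonzero elements of a pencil `V`, each kernel
being a line in `ℂ³` (i.e. a point of `ℙ²`), recorded as a set of submodules of `ℂ³`. -/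
def kerSet (V : Submodule ℂ (Matrix (Fin 3) (Fin 3) ℂ)) : Set (Submodule ℂ (Fin 3 → ℂ)) :=
  {L | ∃ A ∈ V, A ≠ 0 ∧ L = LinearMap.ker A.mulVecLin}

lemma mem_span_singleton_of_cross_eq_zero {F : Type*} [Field F] {v w : Fin 3 → F}
    (hv : v ≠ 0) (h : v ⨯₃ w = 0) : w ∈ Submodule.span F {v} := by
  have := mt crossProduct_ne_zero_iff_linearIndependent.2 (not_not.2 h)
  simpa [LinearIndependent.pair_iff' hv, Submodule.mem_span_singleton] using this

lemma ker_mulVecLin_eq_span_singleton_of_cross {F : Type*} [Field F]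
    {A : Matrix (Fin 3) (Fin 3) F} {v : Fin 3 → F} (hv : v ≠ 0) (hAv : A *ᵥ v = 0)
    (hker : ∀ w, A *ᵥ w = 0 → v ⨯₃ w = 0) :
    LinearMap.ker A.mulVecLin = Submodule.span F {v} :=
  le_antisymm (fun w hw ↦ mem_span_singleton_of_cross_eq_zero hv (hker w hw))
    ((Submodule.span_singleton_le_iff_mem _ _).2 hAv)

lemma vec3_eq_zero_iff {R : Type*} [Zero R] {x y z : R} :
    ![x, y, z] = 0 ↔ x = 0 ∧ y = 0 ∧ z = 0 := by
  simp only [cons_eq_zero_iff, zero_empty, and_true]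

lemma kerSet_span_pair {X Y : Matrix (Fin 3) (Fin 3) ℂ} (hXY : LinearIndependent ℂ ![X, Y]) :
    kerSet (Submodule.span ℂ {X, Y})
      = {L | ∃ a b : ℂ, ¬(a = 0 ∧ b = 0) ∧ L = LinearMap.ker (a • X + b • Y).mulVecLin} := by
  have hne (a b : ℂ) : a • X + b • Y ≠ 0 ↔ ¬(a = 0 ∧ b = 0) :=
    ⟨mt fun ⟨ha, hb⟩ ↦ by simp [ha, hb], mt (LinearIndependent.pair_iff.1 hXY a b)⟩
  ext L
  simp only [kerSet, Submodule.mem_span_pair, Set.mem_ofPred_eq]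
  constructor
  · rintro ⟨_, ⟨a, b, rfl⟩, hA, rfl⟩
    exact ⟨a, b, (hne a b).1 hA, rfl⟩
  · rintro ⟨a, b, hab, rfl⟩
    exact ⟨_, ⟨a, b, rfl⟩, (hne a b).2 hab, rfl⟩

lemma linearIndependent_matF_matG : LinearIndependent ℂ ![matF, matG] := by
  refine LinearIndependent.pair_iff.2 fun s t h ↦ ⟨?_, ?_⟩
  · simpa [matF, matG] using congrFun₂ h 0 1
  · simpa [matF, matG] using congrFun₂ h 0 2

lemma linearIndependent_matF_matH : LinearIndependent ℂ ![matF, matH] := by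
  refine LinearIndependent.pair_iff.2 fun s t h ↦ ⟨?_, ?_⟩
  · simpa [matF, matH] using congrFun₂ h 0 1
  · simpa [matF, matH] using congrFun₂ h 0 0

lemma linearIndependent_transpose_matF_matH : LinearIndependent ℂ ![matFᵀ, matHᵀ] := by
  refine LinearIndependent.pair_iff.2 fun s t h ↦ ⟨?_, ?_⟩
  · simpa [matF, matH] using congrFun₂ h 1 0
  · simpa [matF, matH] using congrFun₂ h 0 0

lemma ker_smul_matF_add_smul_matG {a b : ℂ} (hab : ¬(a = 0 ∧ b = 0)) :
    LinearMap.ker (a • matF + b • matG).mulVecLin = Submodule.span ℂ {![0, b, -a]} := by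
  have hmul (w : Fin 3 → ℂ) :
      (a • matF + b • matG) *ᵥ w = ![a * w 1 + b * w 2, a * w 0, b * w 0] := by
    ext i; fin_cases i <;> simp [matF, matG, mulVec, dotProduct, Fin.sum_univ_three]
  refine ker_mulVecLin_eq_span_singleton_of_cross (by simpa [and_comm] using hab) ?_ fun w hw ↦ ?_
  · rw [hmul, vec3_eq_zero_iff]
    simp only [cons_val]
    exact ⟨by ring, by ring, by ring⟩
  · rw [hmul, vec3_eq_zero_iff] at hw
    obtain ⟨h0, h1, h2⟩ := hw
    rw [cross_apply, vec3_eq_zero_iff]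
    simp only [cons_val]
    exact ⟨by linear_combination h0, by linear_combination -h1, by linear_combination -h2⟩

def conicPoint (a b : ℂ) : Fin 3 → ℂ := ![a * b, -b ^ 2, -a ^ 2]

lemma conicPoint_ne_zero {a b : ℂ} (hab : ¬(a = 0 ∧ b = 0)) : conicPoint a b ≠ 0 := by
  rw [conicPoint, Ne, vec3_eq_zero_iff]
  rintro ⟨-, hb, ha⟩
  exact hab ⟨by simpa using ha, by simpa using hb⟩

lemma conicPoint_mem_conic (a b : ℂ) :
    conicPoint a b 0 ^ 2 - conicPoint a b 1 * conicPoint a b 2 = 0 := by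
  simp only [conicPoint, cons_val]
  ring

lemma ker_smul_matF_add_smul_matH {a b : ℂ} (hab : ¬(a = 0 ∧ b = 0)) :
    LinearMap.ker (a • matF + b • matH).mulVecLin = Submodule.span ℂ {conicPoint a b} := by
  have hmul (w : Fin 3 → ℂ) :
      (a • matF + b • matH) *ᵥ w = ![b * w 0 + a * w 1, a * w 0 + b * w 2, 0] := by
    ext i; fin_cases i <;> simp [matF, matH, mulVec, dotProduct, Fin.sum_univ_three]
  refine ker_mulVecLin_eq_span_singleton_of_cross (conicPoint_ne_zero hab) ?_ fun w hw ↦ ?_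
  · rw [hmul, conicPoint]
    ext i; fin_cases i <;> simp <;> ring
  · rw [hmul, vec3_eq_zero_iff] at hw
    obtain ⟨h0, h1, -⟩ := hw
    rw [conicPoint, cross_apply, vec3_eq_zero_iff]
    simp only [cons_val]
    exact ⟨by linear_combination a * h0 - b * h1, by linear_combination -a * h1,
      by linear_combination b * h0⟩

lemma ker_smul_transpose_matF_add_smul_transpose_matH {a b : ℂ} (hab : ¬(a = 0 ∧ b = 0)) :
    LinearMap.ker (a • matFᵀ + b • matHᵀ).mulVecLin = Submodule.span ℂ {![0, 0, 1]} := by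
  have hmul (w : Fin 3 → ℂ) :
      (a • matFᵀ + b • matHᵀ) *ᵥ w = ![b * w 0 + a * w 1, a * w 0, b * w 1] := by
    ext i; fin_cases i <;> simp [matF, matH, mulVec, dotProduct, Fin.sum_univ_three]
  refine ker_mulVecLin_eq_span_singleton_of_cross (by simp) ?_ fun w hw ↦ ?_
  · rw [hmul]; simp
  · rw [hmul, vec3_eq_zero_iff] at hw
    obtain ⟨h0, h1, h2⟩ := hw
    have hw01 : w 0 = 0 ∧ w 1 = 0 := by
      by_cases ha : a = 0
      · have hb : b ≠ 0 := fun hb ↦ hab ⟨ha, hb⟩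
        simp only [ha, zero_mul, add_zero] at h0
        exact ⟨(mul_eq_zero.1 h0).resolve_left hb, (mul_eq_zero.1 h2).resolve_left hb⟩
      · have hw0 := (mul_eq_zero.1 h1).resolve_left ha
        simp only [hw0, mul_zero, zero_add] at h0
        exact ⟨hw0, (mul_eq_zero.1 h0).resolve_left ha⟩
    rw [cross_apply, vec3_eq_zero_iff]
    simp [hw01]

lemma exists_conicPoint_eq_smul {v : Fin 3 → ℂ} (hv : v ≠ 0) (hq : v 0 ^ 2 - v 1 * v 2 = 0) :
    ∃ a b c : ℂ, c ≠ 0 ∧ conicPoint a b = c • v := by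
  by_cases h2 : v 2 = 0
  · have h1 : v 1 ≠ 0 := by
      intro h1
      have h0 : v 0 = 0 := pow_eq_zero_iff two_ne_zero |>.1 (by linear_combination hq + v 2 * h1)
      exact hv (by ext i; fin_cases i <;> simp [h0, h1, h2])
    refine ⟨v 0, -v 1, -v 1, neg_ne_zero.2 h1, ?_⟩
    ext i; fin_cases i <;> simp [conicPoint, sub_eq_zero.1 hq] <;> ring
  · refine ⟨v 2, -v 0, -v 2, neg_ne_zero.2 h2, ?_⟩
    ext i; fin_cases i <;> simp [conicPoint, sub_eq_zero.1 hq] <;> ring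

theorem kerSet_pencilVl :
    kerSet pencilVl
      = {L | ∃ v : Fin 3 → ℂ, v ≠ 0 ∧ v 0 = 0 ∧ L = Submodule.span ℂ {v}} := by
  rw [pencilVl, kerSet_span_pair linearIndependent_matF_matG]
  ext L
  constructor
  · rintro ⟨a, b, hab, rfl⟩
    exact ⟨_, by simpa [and_comm] using hab, rfl, ker_smul_matF_add_smul_matG hab⟩
  · rintro ⟨v, hv, hv0, rfl⟩
    have hv' : ![0, v 1, -(-v 2)] = v := by ext i; fin_cases i <;> simp [hv0]
    have hab : ¬(-v 2 = 0 ∧ v 1 = 0) := by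
      rintro ⟨h2, h1⟩
      exact hv (by rw [← hv', h1, h2]; simp)
    exact ⟨_, _, hab, by rw [ker_smul_matF_add_smul_matG hab, hv']⟩

theorem kerSet_pencilVc :
    kerSet pencilVc
      = {L | ∃ v : Fin 3 → ℂ, v ≠ 0 ∧ v 0 ^ 2 - v 1 * v 2 = 0 ∧ L = Submodule.span ℂ {v}} := by
  rw [pencilVc, kerSet_span_pair linearIndependent_matF_matH]
  ext L
  constructor
  · rintro ⟨a, b, hab, rfl⟩
    exact ⟨_, conicPoint_ne_zero hab, conicPoint_mem_conic a b, ker_smul_matF_add_smul_matH hab⟩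
  · rintro ⟨v, hv, hq, rfl⟩
    obtain ⟨a, b, c, hc, hk⟩ := exists_conicPoint_eq_smul hv hq
    have hab : ¬(a = 0 ∧ b = 0) := by
      rintro ⟨rfl, rfl⟩
      have : c • v = 0 := by rw [← hk, conicPoint]; simp
      exact hv ((smul_eq_zero.1 this).resolve_left hc)
    refine ⟨a, b, hab, ?_⟩
    rw [ker_smul_matF_add_smul_matH hab, hk, Submodule.span_singleton_smul_eq (IsUnit.mk0 c hc)]

theorem kerSet_pencilVp : kerSet pencilVp = {Submodule.span ℂ {(![0,0,1] : Fin 3 → ℂ)}} := by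
  rw [pencilVp, kerSet_span_pair linearIndependent_transpose_matF_matH]
  ext L
  constructor
  · rintro ⟨a, b, hab, rfl⟩
    exact ker_smul_transpose_matF_add_smul_transpose_matH hab
  · rintro rfl
    exact ⟨1, 0, by simp, (ker_smul_transpose_matF_add_smul_transpose_matH (by simp)).symm⟩

lemma ker_mulVecLin_mul_mul {K n : Type*} [Field K] [Fintype n] [DecidableEq n]
    {M A N : Matrix n n K} (hM : IsUnit M) :
    LinearMap.ker (M * (A * N)).mulVecLin = (LinearMap.ker A.mulVecLin).comap N.mulVecLin := by
  rw [mulVecLin_mul, mulVecLin_mul, LinearMap.ker_comp_of_ker_eq_bot, LinearMap.ker_comp]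
  exact LinearMap.ker_eq_bot.2 (mulVec_injective_of_isUnit hM)

lemma kerSet_map_mulLeft_comp_mulRight {V : Submodule ℂ (Matrix (Fin 3) (Fin 3) ℂ)}
    {M N : Matrix (Fin 3) (Fin 3) ℂ} (hM : IsUnit M) (hN : IsUnit N) :
    kerSet (V.map ((LinearMap.mulLeft ℂ M).comp (LinearMap.mulRight ℂ N)))
      = Submodule.comap N.mulVecLin '' kerSet V := by
  ext L
  simp only [kerSet, Submodule.mem_map, LinearMap.comp_apply, LinearMap.mulLeft_apply,
    LinearMap.mulRight_apply, Set.mem_ofPred_eq, Set.mem_image]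
  constructor
  · rintro ⟨_, ⟨A, hA, rfl⟩, hA0, rfl⟩
    refine ⟨_, ⟨A, hA, fun h ↦ hA0 (by simp [h]), rfl⟩, (ker_mulVecLin_mul_mul hM).symm⟩
  · rintro ⟨_, ⟨A, hA, hA0, rfl⟩, rfl⟩
    refine ⟨M * (A * N), ⟨A, hA, rfl⟩, ?_, (ker_mulVecLin_mul_mul hM).symm⟩
    rwa [Ne, hM.mul_right_eq_zero, hN.mul_left_eq_zero]

lemma pencilEquiv.exists_kerSet_eq_image {V W : Submodule ℂ (Matrix (Fin 3) (Fin 3) ℂ)}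
    (h : pencilEquiv V W) :
    ∃ N : Matrix (Fin 3) (Fin 3) ℂ, IsUnit N ∧
      kerSet W = Submodule.comap N.mulVecLin '' kerSet V := by
  obtain ⟨M, N, hM, hN, rfl⟩ := h
  exact ⟨N, hN, kerSet_map_mulLeft_comp_mulRight hM hN⟩

lemma not_pencilEquiv_of_nontrivial_of_subsingleton
    {V W : Submodule ℂ (Matrix (Fin 3) (Fin 3) ℂ)}
    (hV : (kerSet V).Nontrivial) (hW : (kerSet W).Subsingleton) : ¬ pencilEquiv V W := by
  intro h
  obtain ⟨N, hN, hK⟩ := h.exists_kerSet_eq_image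
  have hinj : Function.Injective (Submodule.comap N.mulVecLin) :=
    Submodule.comap_injective_of_surjective (mulVec_surjective_iff_isUnit.2 hN)
  exact (hK ▸ hV.image hinj).not_subsingleton hW

lemma span_e1_ne_span_e2 :
    Submodule.span ℂ {(![0, 1, 0] : Fin 3 → ℂ)} ≠ Submodule.span ℂ {![0, 0, 1]} := by
  intro h
  obtain ⟨c, hc⟩ := Submodule.mem_span_singleton.1 (h ▸ Submodule.mem_span_singleton_self _)
  simpa using congrFun hc 1

lemma nontrivial_kerSet_pencilVl : (kerSet pencilVl).Nontrivial := by
  rw [kerSet_pencilVl]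
  exact ⟨_, ⟨_, by simp, rfl, rfl⟩, _, ⟨_, by simp, rfl, rfl⟩, span_e1_ne_span_e2⟩

lemma nontrivial_kerSet_pencilVc : (kerSet pencilVc).Nontrivial := by
  rw [kerSet_pencilVc]
  exact ⟨_, ⟨_, by simp, by simp, rfl⟩, _, ⟨_, by simp, by simp, rfl⟩, span_e1_ne_span_e2⟩

lemma not_pencilEquiv_pencilVl_pencilVc : ¬ pencilEquiv pencilVl pencilVc := by
  intro h
  obtain ⟨N, hN, hK⟩ := h.exists_kerSet_eq_image
  have hrow (u : Fin 3 → ℂ) (hu : u ≠ 0) (hq : u 0 ^ 2 - u 1 * u 2 = 0) : (N *ᵥ u) 0 = 0 := by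
    have hmem : Submodule.span ℂ {u} ∈ kerSet pencilVc := kerSet_pencilVc ▸ ⟨u, hu, hq, rfl⟩
    rw [hK, kerSet_pencilVl] at hmem
    obtain ⟨_, ⟨v, -, hv0, rfl⟩, hL⟩ := hmem
    have huN : u ∈ (Submodule.span ℂ {v}).comap N.mulVecLin :=
      hL ▸ Submodule.mem_span_singleton_self u
    obtain ⟨c, hc⟩ := Submodule.mem_span_singleton.1 huN
    simpa [hv0] using (congrFun hc 0).symm
  have h1 := hrow ![0, 1, 0] (by simp) (by simp)
  have h2 := hrow ![0, 0, 1] (by simp) (by simp)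
  have h3 := hrow ![1, -1, -1] (by simp) (by simp only [cons_val]; norm_num)
  simp only [mulVec, dotProduct, Fin.sum_univ_three, cons_val, mul_zero, mul_one, zero_add,
    add_zero, mul_neg] at h1 h2 h3
  have h0 : N 0 0 = 0 := by linear_combination h3 + h1 + h2
  have hdet : N.det = 0 := det_eq_zero_of_row_eq_zero 0 fun j ↦ by fin_cases j <;> assumption
  exact ((isUnit_iff_isUnit_det N).1 hN).ne_zero hdet

/-- For the three model pencils: `K(V_l)` is the line `V(x)`, `K(V_c)` is the smooth conic
`V(x² − yz)` and `K(V_p)` is the single point `V(x,y) = [0,0,1]`. In particular the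
`GL₃(ℂ) × GL₃(ℂ)`-orbits of `V_l`, `V_c`, `V_p` are pairwise distinct. -/
theorem stmt_8 :
    kerSet pencilVl
      = {L | ∃ v : Fin 3 → ℂ, v ≠ 0 ∧ v 0 = 0 ∧ L = Submodule.span ℂ {v}} ∧
    kerSet pencilVc
      = {L | ∃ v : Fin 3 → ℂ, v ≠ 0 ∧ v 0 ^ 2 - v 1 * v 2 = 0 ∧ L = Submodule.span ℂ {v}} ∧
    kerSet pencilVp = {Submodule.span ℂ {(![0,0,1] : Fin 3 → ℂ)}} ∧
    (¬ pencilEquiv pencilVl pencilVc ∧ ¬ pencilEquiv pencilVl pencilVp ∧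
      ¬ pencilEquiv pencilVc pencilVp) := by
  have hVp : (kerSet pencilVp).Subsingleton := kerSet_pencilVp ▸ Set.subsingleton_singleton
  exact ⟨kerSet_pencilVl, kerSet_pencilVc, kerSet_pencilVp, not_pencilEquiv_pencilVl_pencilVc,
    not_pencilEquiv_of_nontrivial_of_subsingleton nontrivial_kerSet_pencilVl hVp,
    not_pencilEquiv_of_nontrivial_of_subsingleton nontrivial_kerSet_pencilVc hVp⟩
end

section
/- Any 2-dimensional subspace of the space of 3×3 complex antisymmetric matrices consists, apart from zero, entirely of matrices of rank 2, and is equivalent under the GL₃(ℂ)×GL₃(ℂ) action (left and right multiplication) to the pencil V_l spanned by E₁₂+E₂₁ and E₁₃+E₃₁. -/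
/-!
Antisymmetric `3 × 3` matrices are exactly the matrices `crossMatrix u` of `v ↦ u ⨯₃ v`. The
kernel of `crossMatrix u` is the line through `u`, so every nonzero one has rank `2`, and `V` is
the image of a plane spanned by independent `a, b`. Completing `a, b` to the columns of an
invertible `P`, the cofactor identity `Pᵀ * crossMatrix (P *ᵥ u) * P = det P • crossMatrix u`
moves `V` onto the span of `crossMatrix e₀` and `crossMatrix e₁`, which one fixed pair of
invertible matrices carries onto `V_l`.
-/

open Matrix

section CrossMatrix

variable {R : Type*} [CommRing R]

def crossMatrix : (Fin 3 → R) →ₗ[R] Matrix (Fin 3) (Fin 3) R where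
  toFun u := !![0, -u 2, u 1; u 2, 0, -u 0; -u 1, u 0, 0]
  map_add' u v := by ext i j; fin_cases i <;> fin_cases j <;> simp [add_comm]
  map_smul' c u := by ext i j; fin_cases i <;> fin_cases j <;> simp

theorem crossMatrix_apply (u : Fin 3 → R) :
    crossMatrix u = !![0, -u 2, u 1; u 2, 0, -u 0; -u 1, u 0, 0] := rfl

theorem crossMatrix_mulVec (u v : Fin 3 → R) : crossMatrix u *ᵥ v = u ⨯₃ v := by
  ext i
  fin_cases i <;>
    simp [crossMatrix_apply, cross_apply, mulVec, dotProduct, Fin.sum_univ_three] <;> ring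

theorem crossMatrix_injective : Function.Injective (crossMatrix : (Fin 3 → R) → _) := by
  intro u v h
  have hij i j := congr_fun (congr_fun h i) j
  ext i
  fin_cases i
  · simpa [crossMatrix_apply] using hij 2 1
  · simpa [crossMatrix_apply] using hij 0 2
  · simpa [crossMatrix_apply] using hij 1 0

theorem mem_range_crossMatrix [NoZeroDivisors R] [NeZero (2 : R)]
    {A : Matrix (Fin 3) (Fin 3) R} (hA : Aᵀ = -A) : A ∈ LinearMap.range crossMatrix := by
  have h i j : A j i = -A i j := congr_fun (congr_fun hA i) j
  have hdiag i : A i i = 0 :=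
    (mul_eq_zero.mp (by linear_combination h i i : (2 : R) * A i i = 0)).resolve_left two_ne_zero
  refine ⟨![A 2 1, A 0 2, A 1 0], ?_⟩
  ext i j
  fin_cases i <;> fin_cases j <;> simp [crossMatrix_apply, hdiag, h 1 2, h 2 0, h 0 1]

theorem transpose_mul_crossMatrix_mulVec_mul (P : Matrix (Fin 3) (Fin 3) R) (u : Fin 3 → R) :
    Pᵀ * crossMatrix (P *ᵥ u) * P = P.det • crossMatrix u := by
  ext i j
  fin_cases i <;> fin_cases j <;>
    simp [crossMatrix_apply, mul_apply, mulVec, dotProduct, Fin.sum_univ_three,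
      det_fin_three] <;> ring

end CrossMatrix

section Field

variable {K : Type*} [Field K]

theorem ker_mulVecLin_crossMatrix {u : Fin 3 → K} (hu : u ≠ 0) :
    LinearMap.ker (crossMatrix u).mulVecLin = K ∙ u := by
  ext v
  rw [LinearMap.mem_ker, mulVecLin_apply, crossMatrix_mulVec, Submodule.mem_span_singleton,
    ← not_iff_not, ← ne_eq, crossProduct_ne_zero_iff_linearIndependent,
    LinearIndependent.pair_iff' hu]
  simp

theorem rank_crossMatrix {u : Fin 3 → K} (hu : u ≠ 0) : (crossMatrix u).rank = 2 := by
  have := LinearMap.finrank_range_add_finrank_ker (crossMatrix u).mulVecLin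
  rw [ker_mulVecLin_crossMatrix hu, finrank_span_singleton hu, Module.finrank_fin_fun] at this
  rw [Matrix.rank]
  omega

theorem exists_linearIndependent_span_range_eq {E : Type*} [AddCommGroup E] [Module K E]
    [FiniteDimensional K E] {n : ℕ} {U : Submodule K E} (hU : Module.finrank K U = n) :
    ∃ v : Fin n → E, LinearIndependent K v ∧ Submodule.span K (Set.range v) = U := by
  subst hU
  let b := Module.finBasis K U
  refine ⟨U.subtype ∘ b, b.linearIndependent.map' U.subtype U.ker_subtype, ?_⟩
  rw [Set.range_comp, Submodule.span_image, b.span_eq, Submodule.map_subtype_top]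

theorem exists_isUnit_col_castSucc_eq {n : ℕ} {v : Fin n → Fin (n + 1) → K}
    (hv : LinearIndependent K v) :
    ∃ P : Matrix (Fin (n + 1)) (Fin (n + 1)) K, IsUnit P ∧ ∀ i, P.col i.castSucc = v i := by
  obtain ⟨w, hw⟩ := exists_linearIndependent_snoc_of_lt_finrank hv (by simp)
  refine ⟨(of (Fin.snoc v w))ᵀ, ?_, fun i => ?_⟩
  · rwa [← linearIndependent_cols_iff_isUnit]
  · simp

theorem exists_isUnit_mul_crossMatrix_mul_eq {v : Fin 2 → Fin 3 → K}
    (hv : LinearIndependent K v) :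
    ∃ M N : Matrix (Fin 3) (Fin 3) K, IsUnit M ∧ IsUnit N ∧
      ∀ i, M * crossMatrix (v i) * N = crossMatrix (Pi.single i.castSucc 1) := by
  obtain ⟨P, hP, hPv⟩ := exists_isUnit_col_castSucc_eq hv
  have hdet : P.det ≠ 0 := ((isUnit_iff_isUnit_det P).mp hP).ne_zero
  refine ⟨P.det⁻¹ • Pᵀ, P, ?_, hP, fun i => ?_⟩
  · simp [isUnit_iff_isUnit_det, hdet]
  · rw [← hPv, ← mulVec_single_one, smul_mul, smul_mul, transpose_mul_crossMatrix_mulVec_mul,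
      smul_smul, inv_mul_cancel₀ hdet, one_smul]

end Field

theorem pencilEquiv_span_range {ι : Type*} {A B : ι → Matrix (Fin 3) (Fin 3) ℂ}
    {M N : Matrix (Fin 3) (Fin 3) ℂ} (hM : IsUnit M) (hN : IsUnit N)
    (h : ∀ i, M * A i * N = B i) :
    pencilEquiv (Submodule.span ℂ (Set.range A)) (Submodule.span ℂ (Set.range B)) := by
  refine ⟨M, N, hM, hN, ?_⟩
  rw [Submodule.map_span, ← Set.range_comp]
  congr
  ext1 i
  simp [← h, mul_assoc]

theorem exists_isUnit_mul_crossMatrix_single_mul_eq :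
    ∃ M N : Matrix (Fin 3) (Fin 3) ℂ, IsUnit M ∧ IsUnit N ∧
      ∀ i : Fin 2, M * crossMatrix (Pi.single i.castSucc 1) * N = ![matF, matG] i := by
  refine ⟨!![0, 0, 1; 0, -1, 0; 1, 0, 0], !![0, 0, -1; 0, 1, 0; 1, 0, 0], ?_, ?_, fun i => ?_⟩
  · simp [isUnit_iff_isUnit_det, det_fin_three]
  · simp [isUnit_iff_isUnit_det, det_fin_three]
  fin_cases i <;> ext j k <;> fin_cases j <;> fin_cases k <;>
    simp [crossMatrix_apply, matF, matG, mul_apply, Fin.sum_univ_three]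

/-- Any 2-dimensional space of antisymmetric `3×3` complex matrices consists, apart from
zero, of matrices of rank `2`, and it is `GL₃(ℂ) × GL₃(ℂ)`-equivalent to the model pencil
`V_l`. -/
theorem stmt_9 (V : Submodule ℂ (Matrix (Fin 3) (Fin 3) ℂ))
    (hdim : Module.finrank ℂ V = 2)
    (hanti : ∀ A ∈ V, Aᵀ = -A) :
    (∀ A ∈ V, A ≠ 0 → A.rank = 2) ∧ pencilEquiv V pencilVl := by
  have hV : (V.comap crossMatrix).map crossMatrix = V :=
    Submodule.map_comap_eq_self fun A hA => mem_range_crossMatrix (hanti A hA)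
  have hU : Module.finrank ℂ (V.comap crossMatrix) = 2 := by
    rw [← hdim, (Submodule.equivMapOfInjective _ crossMatrix_injective _).finrank_eq, hV]
  refine ⟨fun A hA hA0 => ?_, ?_⟩
  · obtain ⟨u, rfl⟩ := mem_range_crossMatrix (hanti A hA)
    exact rank_crossMatrix (by rintro rfl; simp at hA0)
  obtain ⟨v, hv, hvU⟩ := exists_linearIndependent_span_range_eq hU
  obtain ⟨M, N, hM, hN, hMN⟩ := exists_isUnit_mul_crossMatrix_mul_eq hv
  obtain ⟨M₀, N₀, hM₀, hN₀, hMN₀⟩ := exists_isUnit_mul_crossMatrix_single_mul_eq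
  rw [← hV, ← hvU, Submodule.map_span, ← Set.range_comp, pencilVl,
    ← Matrix.range_cons_cons_empty]
  refine pencilEquiv_span_range (hM₀.mul hM) (hN.mul hN₀) fun i => ?_
  rw [← hMN₀ i, ← hMN i]
  simp only [Function.comp_apply, Matrix.mul_assoc]
end

section
/- Let T denote the family of all 3-element subsets of {0,1,...,5}, and σ: T → T the complementation involution I ↦ {0,...,5}∖I. Suppose S ⊂ T satisfies: (1) T is the disjoint union of S and σ(S), and (2) for each a ∈ {0,...,5} the set S_a = {I ∈ S : a ∈ I} has cardinality 5. Then for any two distinct a,b ∈ {0,...,5}, |S_a ∩ S_b| = 2. -/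
lemma six_count : ∀ a b : Fin 6, a ≠ b →
    ((Finset.univ : Finset (Finset (Fin 6))).filter
      (fun J => J.card = 3 ∧ a ∈ J ∧ b ∉ J)).card = 6 := by decide

/-- Let `T` be the family of 3-element subsets of `{0,...,5}` and `σ` the complementation
involution. If `S` consists of triples, contains exactly one member of each complementary
pair `{I, Iᶜ}`, and each element `a` lies in exactly `5` members of `S`, then any two
distinct elements `a ≠ b` lie together in exactly `2` members of `S`. -/
theorem stmt_10 (S : Finset (Finset (Fin 6)))
    (h1 : ∀ I ∈ S, I.card = 3)
    (h2 : ∀ I : Finset (Fin 6), I.card = 3 → (I ∈ S ↔ Iᶜ ∉ S))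
    (h3 : ∀ a : Fin 6, (S.filter (fun I => a ∈ I)).card = 5) :
    ∀ a b : Fin 6, a ≠ b → (S.filter (fun I => a ∈ I ∧ b ∈ I)).card = 2 := by
  intro a b hab
  set U : Finset (Finset (Fin 6)) :=
    (Finset.univ : Finset (Finset (Fin 6))).filter (fun J => J.card = 3 ∧ a ∈ J ∧ b ∉ J) with hU
  -- split h3 a
  have split_a : (S.filter (fun I => a ∈ I ∧ b ∈ I)).card
      + (S.filter (fun I => a ∈ I ∧ b ∉ I)).card = 5 := by
    have := Finset.card_filter_add_card_filter_not
      (s := S.filter (fun I => a ∈ I)) (p := fun I => b ∈ I)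
    simp only [Finset.filter_filter] at this
    rw [h3 a] at this
    convert this using 3
  have split_b : (S.filter (fun I => a ∈ I ∧ b ∈ I)).card
      + (S.filter (fun I => b ∈ I ∧ a ∉ I)).card = 5 := by
    have := Finset.card_filter_add_card_filter_not
      (s := S.filter (fun I => b ∈ I)) (p := fun I => a ∈ I)
    simp only [Finset.filter_filter] at this
    rw [h3 b] at this
    have e : Finset.filter (fun I => b ∈ I ∧ a ∈ I) S
        = Finset.filter (fun I => a ∈ I ∧ b ∈ I) S := by
      apply Finset.filter_congr; intro J _; exact and_comm
    rw [e] at this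
    exact this
  -- split U by membership in S
  have split_U : (U.filter (fun J => J ∈ S)).card + (U.filter (fun J => J ∉ S)).card = 6 := by
    have := Finset.card_filter_add_card_filter_not
      (s := U) (p := fun J => J ∈ S)
    rw [six_count a b hab] at this
    exact this
  -- U ∩ S is exactly the y-set
  have hUS : U.filter (fun J => J ∈ S) = S.filter (fun I => a ∈ I ∧ b ∉ I) := by
    ext J
    simp only [hU, Finset.mem_filter, Finset.mem_univ, true_and]
    constructor
    · rintro ⟨⟨_, hJ⟩, hS⟩; exact ⟨hS, hJ⟩
    · rintro ⟨hS, hJ⟩; exact ⟨⟨h1 J hS, hJ⟩, hS⟩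
  -- complementation bijection: z-set ≃ U \ S
  have compl_card : ∀ J : Finset (Fin 6), J.card = 3 → Jᶜ.card = 3 := by
    intro J hJ
    rw [Finset.card_compl, hJ]
    rfl
  have hbij : (S.filter (fun I => b ∈ I ∧ a ∉ I)).card
      = (U.filter (fun J => J ∉ S)).card := by
    apply Finset.card_bij (fun I _ => Iᶜ)
    · intro I hI
      simp only [Finset.mem_filter] at hI
      obtain ⟨hIS, hbI, haI⟩ := hI
      have hc := h1 I hIS
      simp only [hU, Finset.mem_filter, Finset.mem_univ, true_and, Finset.mem_compl]
      refine ⟨⟨compl_card I hc, haI, by simpa using hbI⟩, ?_⟩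
      exact (h2 I hc).mp hIS
    · intro I hI I' hI' h
      have := congrArg (·ᶜ) h
      simpa using this
    · intro J hJ
      simp only [hU, Finset.mem_filter, Finset.mem_univ, true_and] at hJ
      obtain ⟨⟨hJ3, haJ, hbJ⟩, hJS⟩ := hJ
      refine ⟨Jᶜ, ?_, by simp⟩
      have hJcS : Jᶜ ∈ S := by
        have := h2 Jᶜ (compl_card J hJ3)
        simp only [compl_compl] at this
        exact this.mpr hJS
      simp only [Finset.mem_filter, Finset.mem_compl]
      exact ⟨hJcS, by simpa using hbJ, by simpa using haJ⟩
  rw [hUS] at split_U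
  omega
end
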